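/- arXiv:2101.04901 — 6 statements merged into one kernel-verified Lean document; each statement's English description precedes it below -/
import Mathlib

section
/- Let α = (7+√37)/2 and β = (7−√37)/2. Then Φ_6(α/β) = (860 + 140√37)/9; moreover the rational prime 5 divides Φ_6(α/β) (as an element of ℚ(√37), i.e., Φ_6(α/β)/5 is an algebraic integer times a unit denominator-free element), yet 5 ∤ 6 and 5 ≢ 1 (mod 6). -/
open Polynomial

lemma cyc6 : cyclotomic 6 ℝ = X ^ 2 - X + 1 := by
  have h6 := prod_cyclotomic_eq_X_pow_sub_one (by norm_num : 0 < 6) ℝ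
  have hd : (6 : ℕ).divisors = {1, 2, 3, 6} := by decide
  rw [hd] at h6
  rw [Finset.prod_insert (by decide), Finset.prod_insert (by decide),
    Finset.prod_insert (by decide), Finset.prod_singleton,
    cyclotomic_one, cyclotomic_two, cyclotomic_three] at h6
  have hp : ((X : ℝ[X]) - 1) * ((X + 1) * (X ^ 2 + X + 1)) ≠ 0 := by
    intro h
    have := congrArg (eval 2) h
    norm_num at this
  apply mul_left_cancel₀ hp
  rw [show ((X:ℝ[X]) - 1) * ((X + 1) * (X ^ 2 + X + 1)) * cyclotomic 6 ℝ
      = (X - 1) * ((X + 1) * ((X ^ 2 + X + 1) * cyclotomic 6 ℝ)) by ring, h6]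
  ring

/-- Counterexample showing the cyclotomic divisibility lemma fails for the algebraic
number `α/β` with `α = (7+√37)/2`, `β = (7-√37)/2`: one has
`Φ₆(α/β) = (860 + 140√37)/9`, the prime `5` divides `Φ₆(α/β)` (its norm from `ℚ(√37)`,
namely `(860² - 37·140²)/9²`, has positive `5`-adic valuation), yet `5 ∤ 6` and
`5 ≢ 1 (mod 6)`. -/
theorem cyclotomic_counterexample :
    let α : ℝ := (7 + Real.sqrt 37) / 2
    let β : ℝ := (7 - Real.sqrt 37) / 2
    (cyclotomic 6 ℝ).eval (α / β) = (860 + 140 * Real.sqrt 37) / 9 ∧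
    0 < padicValRat 5 ((860 ^ 2 - 37 * 140 ^ 2 : ℚ) / 9 ^ 2) ∧
    ¬ (5 ∣ 6) ∧ ¬ (5 % 6 = 1) := by
  intro α β
  refine ⟨?_, ?_, by decide, by decide⟩
  · have hs : Real.sqrt 37 ^ 2 = 37 := Real.sq_sqrt (by norm_num)
    have hlt : Real.sqrt 37 < 7 := by
      nlinarith [Real.sqrt_nonneg 37]
    have hβ : (7 : ℝ) - Real.sqrt 37 ≠ 0 := by linarith
    simp only [cyc6, eval_add, eval_sub, eval_pow, eval_X, eval_one, α, β]
    field_simp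
    ring_nf
    nlinarith [Real.sqrt_nonneg 37]
  · have : ((860 ^ 2 - 37 * 140 ^ 2 : ℚ) / 9 ^ 2) = 14400 / 81 := by norm_num
    rw [this]
    haveI : Fact (Nat.Prime 5) := ⟨by norm_num⟩
    rw [show (14400 : ℚ) = ((14400 : ℕ) : ℚ) by norm_num,
        show (81 : ℚ) = ((81 : ℕ) : ℚ) by norm_num,
        padicValRat.div (p := 5) (by norm_num) (by norm_num),
        padicValRat.of_nat, padicValRat.of_nat]
    have h1 : padicValNat 5 14400 = 2 := by
      rw [show (14400 : ℕ) = 5 ^ 2 * 576 by norm_num,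
        padicValNat.mul (by norm_num) (by norm_num), padicValNat.prime_pow]
      have : padicValNat 5 576 = 0 := padicValNat.eq_zero_of_not_dvd (by decide)
      omega
    have h2 : padicValNat 5 81 = 0 := padicValNat.eq_zero_of_not_dvd (by decide)
    rw [h1, h2]
    norm_num
end

section
/- Let U_n be a Lucas sequence of the first kind with parameters P, Q. For every real ratio r = α/β with |r| > 1, there exists a constant C > 0 such that |Φ_m(r)| ≥ C·|r|^{φ(m)} for all positive integers m, where φ is Euler's totient function. -/
open Polynomial Finset ArithmeticFunction
open scoped ArithmeticFunction.Moebius ArithmeticFunction.Omega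

/-- For a real `r` with `|r| > 1` there is `C > 0` with `|Φ_m(r)| ≥ C |r| ^ φ(m)`
for all positive integers `m`. -/
theorem cyclotomic_eval_lower_bound (r : ℝ) (hr : 1 < |r|) :
    ∃ C : ℝ, 0 < C ∧ ∀ m : ℕ, 0 < m →
      C * |r| ^ Nat.totient m ≤ |(cyclotomic m ℝ).eval r| := by
  set q : ℝ := |r| with hqdef
  set t : ℝ := q⁻¹ with htdef
  have hq0 : 0 < q := lt_trans one_pos hr
  have ht0 : 0 < t := inv_pos.2 hq0
  have ht1 : t < 1 := inv_lt_one_of_one_lt₀ hr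
  have h1t : (0:ℝ) < 1 - t := by linarith
  have hqn : ∀ n : ℕ, 0 < n → 1 < q ^ n := fun n hn => one_lt_pow₀ hr hn.ne'
  have hlow : ∀ n : ℕ, q ^ n - 1 ≤ |r ^ n - 1| := by
    intro n
    calc q ^ n - 1 = |r ^ n| - |(1:ℝ)| := by rw [abs_pow, abs_one]
      _ ≤ |r ^ n - 1| := abs_sub_abs_le_abs_sub _ _
  have hup : ∀ n : ℕ, |r ^ n - 1| ≤ q ^ n + 1 := by
    intro n
    calc |r ^ n - 1| = |r ^ n + (-1)| := by rw [sub_eq_add_neg]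
      _ ≤ |r ^ n| + |(-1:ℝ)| := abs_add_le _ _
      _ = q ^ n + 1 := by rw [abs_pow, abs_neg, abs_one]
  have hg0 : ∀ n : ℕ, 0 < n → 0 < |r ^ n - 1| := fun n hn =>
    lt_of_lt_of_le (by linarith [hqn n hn]) (hlow n)
  have hc : ∀ i : ℕ, 0 < i → (cyclotomic i ℝ).eval r ≠ 0 := by
    intro i hi h0
    obtain ⟨k, hk⟩ := cyclotomic.dvd_X_pow_sub_one i ℝ
    have he : r ^ i - 1 = 0 := by
      have := congrArg (eval r) hk
      simpa [h0] using this
    have h2 := hg0 i hi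
    rw [he, abs_zero] at h2
    exact lt_irrefl 0 h2
  -- Möbius inversion for |Φ_n(r)|
  have key1 : ∀ n > 0, ∏ x ∈ n.divisorsAntidiagonal, |r ^ x.2 - 1| ^ (μ x.1) =
      |(cyclotomic n ℝ).eval r| := by
    refine (prod_eq_iff_prod_pow_moebius_eq_of_nonzero
      (f := fun i => |(cyclotomic i ℝ).eval r|) (g := fun n => |r ^ n - 1|)
      (fun n hn => abs_ne_zero.2 (hc n hn)) (fun n hn => (hg0 n hn).ne')).1 ?_
    intro n hn
    rw [← Finset.abs_prod, ← eval_prod, prod_cyclotomic_eq_X_pow_sub_one hn, eval_sub,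
      eval_pow, eval_X, eval_one]
  -- Möbius inversion for q ^ φ(n)
  have key2 : ∀ n > 0, ∏ x ∈ n.divisorsAntidiagonal, ((q : ℝ) ^ x.2) ^ (μ x.1) =
      q ^ Nat.totient n := by
    refine (prod_eq_iff_prod_pow_moebius_eq_of_nonzero
      (f := fun n => q ^ Nat.totient n) (g := fun n => q ^ n)
      (fun n _ => (pow_pos hq0 _).ne') (fun n _ => (pow_pos hq0 _).ne')).1 ?_
    intro n hn
    rw [Finset.prod_pow_eq_pow_sum, Nat.sum_totient]
  refine ⟨Real.exp (-(t / ((1 - t) * (1 - t)))), Real.exp_pos _, ?_⟩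
  intro m hm
  have hsplit : |(cyclotomic m ℝ).eval r| =
      (∏ x ∈ m.divisorsAntidiagonal, (|r ^ x.2 - 1| / q ^ x.2) ^ (μ x.1)) *
        q ^ Nat.totient m := by
    rw [← key1 m hm, ← key2 m hm, ← Finset.prod_mul_distrib]
    refine Finset.prod_congr rfl fun x _ => ?_
    rw [← mul_zpow, div_mul_cancel₀ _ (pow_pos hq0 _).ne']
  rw [hsplit]
  refine mul_le_mul_of_nonneg_right ?_ (pow_pos hq0 _).le
  -- sum bound
  have hsum : ∑ i ∈ m.divisors, t ^ i ≤ t / (1 - t) := by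
    have hsub : m.divisors ⊆ (Finset.range (m + 1)).erase 0 := by
      intro b hb
      rcases Nat.mem_divisors.1 hb with ⟨hdvd, hne⟩
      exact Finset.mem_erase.2 ⟨(Nat.pos_of_mem_divisors hb).ne',
        Finset.mem_range.2 (Nat.lt_succ_of_le (Nat.le_of_dvd (Nat.pos_of_ne_zero hne) hdvd))⟩
    have h1 : ∑ i ∈ m.divisors, t ^ i ≤ ∑ i ∈ (Finset.range (m + 1)).erase 0, t ^ i :=
      Finset.sum_le_sum_of_subset_of_nonneg hsub fun i _ _ => pow_nonneg ht0.le i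
    have h2 : ∑ i ∈ (Finset.range (m + 1)).erase 0, t ^ i =
        (∑ i ∈ Finset.range (m + 1), t ^ i) - 1 := by
      rw [Finset.sum_erase_eq_sub (Finset.mem_range.2 (Nat.succ_pos m)), pow_zero]
    have h3 : (1 - t) * ∑ i ∈ Finset.range (m + 1), t ^ i = 1 - t ^ (m + 1) := by
      linear_combination -geom_sum_mul t (m + 1)
    have h4 : (0:ℝ) ≤ t ^ (m + 1) := pow_nonneg ht0.le _
    rw [h2] at h1
    refine le_trans h1 ?_
    rw [le_div_iff₀ h1t]
    nlinarith
  calc Real.exp (-(t / ((1 - t) * (1 - t))))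
      ≤ ∏ x ∈ m.divisorsAntidiagonal, (1 - t ^ x.2) := by
        have hstep : ∏ x ∈ m.divisorsAntidiagonal, (1 - t ^ x.2) =
            ∏ i ∈ m.divisors, (1 - t ^ i) :=
          Nat.prod_divisorsAntidiagonal' (fun _ b => 1 - t ^ b)
        rw [hstep]
        calc Real.exp (-(t / ((1 - t) * (1 - t))))
            ≤ ∏ i ∈ m.divisors, Real.exp (-(t ^ i / (1 - t))) := by
              rw [← Real.exp_sum]
              refine Real.exp_le_exp.2 ?_
              rw [Finset.sum_neg_distrib, ← Finset.sum_div, neg_le_neg_iff, ← div_div]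
              exact (div_le_div_iff_of_pos_right h1t).2 hsum
          _ ≤ ∏ i ∈ m.divisors, (1 - t ^ i) := by
              refine Finset.prod_le_prod (fun i _ => (Real.exp_pos _).le) fun i hi => ?_
              have hipos : 0 < i := Nat.pos_of_mem_divisors hi
              have hti : t ^ i ≤ t := pow_le_of_le_one ht0.le ht1.le hipos.ne'
              have hti1 : t ^ i < 1 := lt_of_le_of_lt hti ht1
              have hz0 : 0 ≤ t ^ i / (1 - t) := div_nonneg (pow_nonneg ht0.le i) h1t.le
              have hz : t ^ i / (1 - t) * (1 - t) = t ^ i := div_mul_cancel₀ _ h1t.ne'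
              have hinv : (1 - t ^ i)⁻¹ ≤ Real.exp (t ^ i / (1 - t)) := by
                have hA : (1 - t ^ i)⁻¹ ≤ 1 + t ^ i / (1 - t) := by
                  rw [inv_eq_one_div, div_le_iff₀ (by linarith : (0:ℝ) < 1 - t ^ i)]
                  nlinarith [mul_nonneg hz0 (sub_nonneg.2 hti)]
                refine hA.trans ?_
                have := Real.add_one_le_exp (t ^ i / (1 - t))
                linarith
              rw [Real.exp_neg]
              have := inv_anti₀ (inv_pos.2 (by linarith : (0:ℝ) < 1 - t ^ i)) hinv
              rwa [inv_inv] at this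
    _ ≤ ∏ x ∈ m.divisorsAntidiagonal, (|r ^ x.2 - 1| / q ^ x.2) ^ (μ x.1) := by
        refine Finset.prod_le_prod (fun x hx => ?_) fun x hx => ?_
        · have hb := Nat.snd_mem_divisors_of_mem_antidiagonal hx
          have : t ^ x.2 ≤ 1 := pow_le_one₀ ht0.le ht1.le
          linarith
        · have hb := Nat.snd_mem_divisors_of_mem_antidiagonal hx
          have hbpos : 0 < x.2 := Nat.pos_of_mem_divisors hb
          have hqb : (0:ℝ) < q ^ x.2 := pow_pos hq0 _
          have htb : t ^ x.2 = (q ^ x.2)⁻¹ := by rw [htdef, inv_pow]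
          have htb1 : t ^ x.2 < 1 :=
            lt_of_le_of_lt (pow_le_of_le_one ht0.le ht1.le hbpos.ne') ht1
          have htbpos : 0 < t ^ x.2 := pow_pos ht0 _
          have hu1 : 1 - t ^ x.2 ≤ |r ^ x.2 - 1| / q ^ x.2 := by
            rw [htb]
            have e1 : 1 - (q ^ x.2)⁻¹ = (q ^ x.2 - 1) / q ^ x.2 := by
              field_simp
            rw [e1]
            exact (div_le_div_iff_of_pos_right hqb).2 (hlow x.2)
          have hu2 : |r ^ x.2 - 1| / q ^ x.2 ≤ 1 + t ^ x.2 := by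
            rw [htb]
            have e2 : 1 + (q ^ x.2)⁻¹ = (q ^ x.2 + 1) / q ^ x.2 := by
              field_simp
            rw [e2]
            exact (div_le_div_iff_of_pos_right hqb).2 (hup x.2)
          have hu0 : 0 < |r ^ x.2 - 1| / q ^ x.2 := div_pos (hg0 x.2 hbpos) hqb
          by_cases hs : Squarefree x.1
          · rw [moebius_apply_of_squarefree hs]
            rcases Nat.even_or_odd (Ω x.1) with he | ho
            · rw [he.neg_one_pow, zpow_one]
              exact hu1
            · rw [ho.neg_one_pow, zpow_neg_one]
              calc 1 - t ^ x.2 ≤ (1 + t ^ x.2)⁻¹ := by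
                    have h4 : (0:ℝ) < 1 + t ^ x.2 := by positivity
                    rw [inv_eq_one_div, le_div_iff₀ h4]
                    nlinarith
                _ ≤ (|r ^ x.2 - 1| / q ^ x.2)⁻¹ := inv_anti₀ hu0 hu2
          · rw [moebius_eq_zero_of_not_squarefree hs, zpow_zero]
            linarith
end

section
/- Let p be an odd prime coprime to 2Q. If p | U_n and p² ∤ U_n for some n ≥ 1, then p | U_{p − (Δ/p)} and p² ∤ U_{p − (Δ/p)}, i.e., p is a Lucas non-Wieferich prime. -/
/-- Lucas sequence of the first kind. -/
def lucasU (P Q : ℤ) : ℕ → ℤ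
  | 0 => 0
  | 1 => 1
  | (n + 2) => P * lucasU P Q (n + 1) - Q * lucasU P Q n

lemma lucasU_zero (P Q : ℤ) : lucasU P Q 0 = 0 := rfl
lemma lucasU_one (P Q : ℤ) : lucasU P Q 1 = 1 := rfl
lemma lucasU_two_add (P Q : ℤ) (n : ℕ) :
    lucasU P Q (n+2) = P * lucasU P Q (n+1) - Q * lucasU P Q n := rfl
lemma lucasU_two (P Q : ℤ) : lucasU P Q 2 = P := by
  rw [show (2:ℕ) = 0+2 from rfl, lucasU_two_add, lucasU_one, lucasU_zero]; ring

lemma lucasU_add (P Q : ℤ) (m n : ℕ) :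
    lucasU P Q (m + n + 1) =
      lucasU P Q (m+1) * lucasU P Q (n+1) - Q * lucasU P Q m * lucasU P Q n := by
  induction m using Nat.twoStepInduction with
  | zero => simp [lucasU_one, lucasU_zero]
  | one =>
      have h : 1 + n + 1 = n + 2 := by omega
      rw [h, lucasU_two_add, lucasU_two, lucasU_one]; ring
  | more m ihm ihm1 =>
      have h : m + 2 + n + 1 = (m + n + 1) + 2 := by omega
      have h2 : (m+1) + n + 1 = (m + n + 1) + 1 := by omega
      rw [h, lucasU_two_add, ← h2, ihm1, ihm,
        show m+3 = (m+1)+2 from rfl, lucasU_two_add (n := m+1), lucasU_two_add (n := m)]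
      ring

lemma lucasU_coprime (P Q : ℤ) (hPQ : IsCoprime P Q) (n : ℕ) :
    IsCoprime (lucasU P Q (n+1)) (lucasU P Q n) ∧ IsCoprime (lucasU P Q (n+1)) Q := by
  induction n with
  | zero =>
      rw [lucasU_one, lucasU_zero]
      exact ⟨isCoprime_one_left, isCoprime_one_left⟩
  | succ n ih =>
      obtain ⟨h1, h2⟩ := ih
      have hQU : IsCoprime (lucasU P Q (n+1)) (Q * lucasU P Q n) := h2.mul_right h1
      constructor
      · have e : lucasU P Q (n+2) = -(Q * lucasU P Q n) + lucasU P Q (n+1) * P := by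
          rw [lucasU_two_add]; ring
        rw [e]
        exact ((hQU.neg_right.add_mul_left_right P)).symm
      · have e : lucasU P Q (n+2) = P * lucasU P Q (n+1) + (-(lucasU P Q n)) * Q := by
          rw [lucasU_two_add]; ring
        rw [e]
        exact (hPQ.mul_left h2).add_mul_right_left _

lemma lucasU_apparition (P Q : ℤ) (p : ℕ) [hp : Fact p.Prime] (hodd : Odd p)
    (hQp : ¬ (p:ℤ) ∣ Q) :
    (p:ℤ) ∣ lucasU P Q (((p:ℤ) - legendreSym p (P ^ 2 - 4 * Q)).toNat) := by
  classical
  have hp2 : p ≠ 2 := by rintro rfl; exact (by decide : ¬ Odd 2) hodd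
  have hp1 : 1 ≤ p := hp.out.one_lt.le
  set K := AlgebraicClosure (ZMod p) with hK
  have hcast : ∀ x : ℤ, algebraMap (ZMod p) K ((x : ZMod p)) = (x : K) :=
    fun x => map_intCast (algebraMap (ZMod p) K) x
  have hker : ∀ x : ℤ, ((p:ℤ) ∣ x ↔ (x : K) = 0) := by
    intro x
    rw [← ZMod.intCast_zmod_eq_zero_iff_dvd x p, ← hcast x]
    exact ⟨fun h => by rw [h, map_zero],
      fun h => (algebraMap (ZMod p) K).injective (by rw [h, map_zero])⟩
  -- 2 is invertible in K
  have h2K : (2 : K) ≠ 0 := by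
    intro h
    have : ((2:ℤ) : K) = 0 := by push_cast; exact h
    have := (hker 2).mpr this
    have := Int.natCast_dvd_natCast.mp (by exact_mod_cast this)
    exact hp2 ((Nat.prime_dvd_prime_iff_eq hp.out Nat.prime_two).mp this)
  -- square root of the discriminant
  obtain ⟨s, hs⟩ : ∃ s : K, s ^ 2 = ((P ^ 2 - 4 * Q : ℤ) : K) :=
    IsAlgClosed.exists_pow_nat_eq _ (by norm_num)
  set a : K := ((P : K) + s) / 2 with ha
  set b : K := ((P : K) - s) / 2 with hb
  have hab : a + b = (P : K) := by rw [ha, hb]; linear_combination (P:K) * mul_inv_cancel₀ h2K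
  have hsub : a - b = s := by rw [ha, hb]; linear_combination s * mul_inv_cancel₀ h2K
  have hmul : a * b = (Q : K) := by
    rw [ha, hb]
    have hs' : s ^ 2 = (P:K) ^ 2 - 4 * (Q:K) := by
      rw [hs, Int.cast_sub, Int.cast_mul, Int.cast_pow, Int.cast_ofNat]
    linear_combination (-(2:K)⁻¹ ^ 2) * hs' + (Q:K) * (2 * (2:K)⁻¹ + 1) * mul_inv_cancel₀ h2K
  set g : ℕ → K := fun k => ((lucasU P Q k : ℤ) : K) with hg
  have key : ∀ k, (a - b) * g k = a ^ k - b ^ k := by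
    intro k
    induction k using Nat.twoStepInduction with
    | zero => simp [hg, lucasU_zero]
    | one => simp [hg, lucasU_one]
    | more k ihk ihk1 =>
        have e : g (k+2) = (P : K) * g (k+1) - (Q : K) * g k := by
          rw [hg]; simp only [lucasU_two_add]; rw [Int.cast_sub, Int.cast_mul, Int.cast_mul]
        rw [e, ← hab, ← hmul]
        linear_combination (a + b) * ihk1 - (a * b) * ihk
  -- Frobenius computations
  have hPfix : (P : K) ^ p = (P : K) := by
    rw [← hcast P, ← map_pow, ZMod.pow_card]
  have hleg : ((P ^ 2 - 4 * Q : ℤ) : K) ^ (p / 2) = ((legendreSym p (P ^ 2 - 4 * Q) : ℤ) : K) := by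
    rw [← hcast (P ^ 2 - 4 * Q), ← map_pow, ← legendreSym.eq_pow, hcast]
  have hps : 2 * (p / 2) + 1 = p := by
    have := Nat.odd_iff.mp hodd; omega
  have hfrob : a ^ p - b ^ p = s * ((legendreSym p (P ^ 2 - 4 * Q) : ℤ) : K) := by
    have e1 : s ^ p = (s ^ 2) ^ (p / 2) * s := by
      rw [← pow_mul, ← pow_succ]
      exact congrArg (fun n => s ^ n) hps.symm
    rw [← sub_pow_char, hsub, e1, hs, hleg, mul_comm]
  have hsum : a ^ p + b ^ p = a + b := by
    rw [← add_pow_char, hab, hPfix]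
  -- case split on the Legendre symbol
  by_cases hΔ0 : ((P ^ 2 - 4 * Q : ℤ) : ZMod p) = 0
  · -- Legendre symbol is zero; index is p
    have he : legendreSym p (P ^ 2 - 4 * Q) = 0 := (legendreSym.eq_zero_iff _ _).mpr hΔ0
    rw [he]
    have hidx : ((p:ℤ) - (0:ℤ)).toNat = p := by omega
    rw [hidx]
    have hΔK : ((P ^ 2 - 4 * Q : ℤ) : K) = 0 := by
      rw [← hcast (P ^ 2 - 4 * Q), hΔ0]; exact map_zero _
    have hs0 : s = 0 := by
      have : s ^ 2 = 0 := by rw [hs, hΔK]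
      exact pow_eq_zero_iff (by norm_num) |>.mp this
    have hba : b = a := by
      have h := hsub; rw [hs0] at h; exact (sub_eq_zero.mp h).symm
    have hform : ∀ k, g (k+1) = ((k:K) + 1) * a ^ k := by
      intro k
      induction k using Nat.twoStepInduction with
      | zero => simp [hg, lucasU_one]
      | one =>
          have e : g 2 = (P : K) := by rw [hg]; simp [lucasU_two]
          rw [e, ← hab, hba]; push_cast; ring
      | more k ihk ihk1 =>
          have e : g (k+3) = (P : K) * g (k+2) - (Q : K) * g (k+1) := by
            show ((lucasU P Q ((k+1)+2) : ℤ) : K) = (P:K) * ((lucasU P Q (k+2) : ℤ) : K) - (Q:K) * ((lucasU P Q (k+1) : ℤ) : K)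
            rw [lucasU_two_add, Int.cast_sub, Int.cast_mul, Int.cast_mul]
          rw [e, ← hab, ← hmul, hba, ihk, ihk1]
          push_cast; ring
    rw [hker]
    show g p = 0
    have hgp : g p = ((p - 1 : ℕ) : K) * a ^ (p-1) + a ^ (p-1) := by
      have hp' : p = (p - 1) + 1 := by omega
      conv_lhs => rw [hp']
      rw [hform (p-1)]; ring
    rw [hgp]
    have hc1 : ((p - 1 : ℕ) : K) = ((p : ℕ) : K) - 1 := by
      rw [Nat.cast_sub hp1]; norm_num
    have hpK : ((p : ℕ) : K) = 0 := CharP.cast_eq_zero K p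
    rw [hc1, hpK]; ring
  · have hΔK : ((P ^ 2 - 4 * Q : ℤ) : K) ≠ 0 := by
      rw [← hcast (P ^ 2 - 4 * Q)]
      intro h
      exact hΔ0 ((algebraMap (ZMod p) K).injective (by rw [h, map_zero]))
    have hsne : s ≠ 0 := by
      intro h; apply hΔK; rw [← hs, h]; ring
    have hQK : (Q : K) ≠ 0 := by
      intro h
      exact hQp ((hker Q).mpr h)
    rcases legendreSym.eq_one_or_neg_one p hΔ0 with he | he
    · -- symbol = 1 : index p - 1
      rw [he]
      have hidx : ((p:ℤ) - (1:ℤ)).toNat = p - 1 := by omega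
      rw [hidx]
      have hfr : a ^ p - b ^ p = a - b := by rw [hfrob, he, hsub]; norm_num
      have hap : a ^ p = a := by
        have h2 : (2:K) * a ^ p = (2:K) * a := by linear_combination hfr + hsum
        exact mul_left_cancel₀ h2K h2
      have hbp : b ^ p = b := by
        have h2 : (2:K) * b ^ p = (2:K) * b := by linear_combination hsum - hfr
        exact mul_left_cancel₀ h2K h2
      rw [hker]
      have hk := key (p - 1)
      have hpp : (p - 1) + 1 = p := by omega
      have hA : a ^ (p-1) * a = a := by rw [← pow_succ, hpp, hap]
      have hB : b ^ (p-1) * b = b := by rw [← pow_succ, hpp, hbp]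
      have h0 : (a * b) * ((a - b) * g (p-1)) = 0 := by
        rw [hk]; linear_combination b * hA - a * hB
      have hsg : (a - b) * g (p-1) = 0 := by
        rcases mul_eq_zero.mp h0 with h | h
        · exact absurd h (by rw [hmul]; exact hQK)
        · exact h
      rcases mul_eq_zero.mp hsg with h | h
      · exact absurd h (by rw [hsub]; exact hsne)
      · exact h
    · -- symbol = -1 : index p + 1
      rw [he]
      have hidx : ((p:ℤ) - (-1:ℤ)).toNat = p + 1 := by omega
      rw [hidx]
      have hfr : a ^ p - b ^ p = b - a := by rw [hfrob, he, show b - a = -(a - b) from by ring, hsub]; push_cast; ring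
      have hap : a ^ p = b := by
        have h2 : (2:K) * a ^ p = (2:K) * b := by linear_combination hfr + hsum
        exact mul_left_cancel₀ h2K h2
      have hbp : b ^ p = a := by
        have h2 : (2:K) * b ^ p = (2:K) * a := by linear_combination hsum - hfr
        exact mul_left_cancel₀ h2K h2
      rw [hker]
      have hk := key (p + 1)
      have h0 : (a - b) * g (p+1) = 0 := by
        rw [hk, pow_succ, pow_succ, hap, hbp]; ring
      rcases mul_eq_zero.mp h0 with h | h
      · exact absurd h (by rw [hsub]; exact hsne)
      · exact h


/-- If an odd prime `p` coprime to `2Q` divides `U n` exactly to the first power for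
some `n ≥ 1`, then `p` divides `U_{p - (Δ/p)}` exactly to the first power, i.e. `p` is a
Lucas non-Wieferich prime. -/
theorem lucas_nonWieferich_criterion (P Q : ℤ) (hP : P ≠ 0) (hQ : Q ≠ 0)
    (hPQ : IsCoprime P Q) (hΔ : 0 < P ^ 2 - 4 * Q)
    (p : ℕ) [Fact p.Prime] (hodd : Odd p) (hcop : IsCoprime (p : ℤ) (2 * Q))
    (n : ℕ) (hn : 1 ≤ n)
    (h1 : (p : ℤ) ∣ lucasU P Q n) (h2 : ¬ (p : ℤ) ^ 2 ∣ lucasU P Q n) :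
    (p : ℤ) ∣ lucasU P Q (((p : ℤ) - legendreSym p (P ^ 2 - 4 * Q)).toNat) ∧
    ¬ (p : ℤ) ^ 2 ∣ lucasU P Q (((p : ℤ) - legendreSym p (P ^ 2 - 4 * Q)).toNat) := by
  classical
  have hp := (Fact.out : p.Prime)
  have hpP : Prime (p : ℤ) := Int.prime_iff_natAbs_prime.mpr (by simpa using hp)
  have hp3 : 3 ≤ p := by
    have h2le := hp.two_le
    have := Nat.odd_iff.mp hodd
    omega
  have hQp : ¬ (p:ℤ) ∣ Q := by
    intro hd
    exact hpP.not_unit ((hcop.of_mul_right_right).isUnit_of_dvd' dvd_rfl hd)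
  have hdvd1 := lucasU_apparition P Q p hodd hQp
  set mstar := ((p : ℤ) - legendreSym p (P ^ 2 - 4 * Q)).toNat with hm
  have he3 : legendreSym p (P ^ 2 - 4 * Q) = 0 ∨ legendreSym p (P ^ 2 - 4 * Q) = 1 ∨
      legendreSym p (P ^ 2 - 4 * Q) = -1 := by
    by_cases h : ((P ^ 2 - 4 * Q : ℤ) : ZMod p) = 0
    · exact Or.inl ((legendreSym.eq_zero_iff _ _).mpr h)
    · exact Or.inr (legendreSym.eq_one_or_neg_one p h)
  have hb : 1 ≤ mstar ∧ mstar ≤ p + 1 := by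
    rcases he3 with h | h | h <;> rw [h] at hm <;> constructor <;> omega
  -- rank of apparition
  have hex : ∃ m, 0 < m ∧ (p:ℤ) ∣ lucasU P Q m := ⟨n, hn, h1⟩
  set r := Nat.find hex with hrdef
  have hrspec := Nat.find_spec hex
  have hrpos : 0 < r := hrspec.1
  have hrdvd : (p:ℤ) ∣ lucasU P Q r := hrspec.2
  have hrmin : ∀ m, m < r → ¬(0 < m ∧ (p:ℤ) ∣ lucasU P Q m) := fun m hm' => Nat.find_min hex hm'
  have hr1 : r ≠ 1 := by
    intro h
    rw [h, lucasU_one] at hrdvd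
    exact hpP.not_unit (isUnit_of_dvd_one hrdvd)
  have hr2 : 2 ≤ r := by omega
  have h1r : r - 1 + 1 = r := by omega
  -- p divides U_{kr}
  have hmulr : ∀ a : ℕ, (a+1)*r = a*r + r := fun a => by rw [add_mul, one_mul]
  have hUmul : ∀ k, (p:ℤ) ∣ lucasU P Q (k * r) := by
    intro k
    induction k with
    | zero => simp [lucasU_zero]
    | succ k ih =>
        have hidx : (k+1) * r = k*r + (r-1) + 1 := by have := hmulr k; omega
        rw [hidx, lucasU_add, h1r]
        exact dvd_sub (hrdvd.mul_left _) ((ih.mul_left Q).mul_right _)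
  -- rank divides any index with p | U
  have hrank : ∀ m, (p:ℤ) ∣ lucasU P Q m → r ∣ m := by
    intro m hm'
    by_contra hnd
    have hmod : m % r ≠ 0 := fun h => hnd (Nat.dvd_of_mod_eq_zero h)
    have hslt : m % r < r := Nat.mod_lt _ hrpos
    have hspos : 0 < m % r := Nat.pos_of_ne_zero hmod
    have hidx : m = r * (m / r) + (m % r - 1) + 1 := by
      have := Nat.div_add_mod m r; omega
    rw [hidx, lucasU_add] at hm'
    have h1' : m % r - 1 + 1 = m % r := by omega
    rw [h1'] at hm'
    have hqq : (p:ℤ) ∣ lucasU P Q (r * (m/r)) := by rw [mul_comm]; exact hUmul _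
    have hq : (p:ℤ) ∣ Q * lucasU P Q (r * (m/r)) * lucasU P Q (m % r - 1) :=
      (hqq.mul_left Q).mul_right _
    have hmul2 : (p:ℤ) ∣ lucasU P Q (r * (m/r) + 1) * lucasU P Q (m % r) := by
      have := dvd_add hm' hq
      simpa using this
    rcases hpP.dvd_mul.mp hmul2 with h | h
    · exact hpP.not_unit ((lucasU_coprime P Q hPQ (r * (m/r))).1.isUnit_of_dvd' h hqq)
    · exact hrmin (m % r) hslt ⟨hspos, h⟩
  set c := lucasU P Q (r+1) with hc
  have hpc : ¬ (p:ℤ) ∣ c :=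
    fun h => hpP.not_unit ((lucasU_coprime P Q hPQ r).1.isUnit_of_dvd' h hrdvd)
  -- U_{kr+1} ≡ c^k mod p
  have L1 : ∀ k, (p:ℤ) ∣ (lucasU P Q (k*r+1) - c^k) := by
    intro k
    induction k with
    | zero => simp [lucasU_one]
    | succ k ih =>
        have hidx : (k+1)*r + 1 = k*r + r + 1 := by have := hmulr k; omega
        rw [hidx, lucasU_add]
        have e : lucasU P Q (k*r+1) * lucasU P Q (r+1) - Q * lucasU P Q (k*r) * lucasU P Q r
              - c^(k+1)
            = (lucasU P Q (k*r+1) - c^k) * c - (Q * lucasU P Q (k*r)) * lucasU P Q r := by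
          rw [← hc]; ring
        rw [← hc, e]
        exact dvd_sub (ih.mul_right c) (hrdvd.mul_left _)
  -- U_{(k+1)r} ≡ (k+1) U_r c^k mod p²
  have hcQ : (p:ℤ) ∣ Q * lucasU P Q (r-1) + c := by
    have hcr : c = P * lucasU P Q r - Q * lucasU P Q (r-1) := by
      rw [hc, show r + 1 = (r-1)+2 from by omega, lucasU_two_add, h1r]
    have e : Q * lucasU P Q (r-1) + c = P * lucasU P Q r := by rw [hcr]; ring
    rw [e]
    exact hrdvd.mul_left P
  have L2 : ∀ k, (p:ℤ)^2 ∣ (lucasU P Q ((k+1)*r) - ((k:ℤ)+1) * lucasU P Q r * c^k) := by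
    intro k
    induction k with
    | zero =>
        have e : (0+1)*r = r := by omega
        rw [e]
        have e2 : lucasU P Q r - (((0:ℕ):ℤ)+1) * lucasU P Q r * c^0 = 0 := by push_cast; ring
        rw [e2]
        exact dvd_zero _
    | succ k ih =>
        have hL1 := L1 (k+1)
        have hidx : (k+2)*r = (k+1)*r + (r-1) + 1 := by
          have h : (k+2)*r = (k+1)*r + r := by
            rw [show (k+2) = (k+1)+1 from rfl, add_mul, one_mul]
          omega
        rw [show k+1+1 = k+2 from rfl, hidx, lucasU_add, h1r]
        have key_eq : lucasU P Q ((k+1)*r+1) * lucasU P Q r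
              - Q * lucasU P Q ((k+1)*r) * lucasU P Q (r-1)
              - (((k+1:ℕ):ℤ)+1) * lucasU P Q r * c^(k+1)
            = (lucasU P Q ((k+1)*r+1) - c^(k+1)) * lucasU P Q r
              - (Q * lucasU P Q (r-1)) * (lucasU P Q ((k+1)*r) - ((k:ℤ)+1) * lucasU P Q r * c^k)
              - (((k:ℤ)+1)*c^k) * (lucasU P Q r * (Q * lucasU P Q (r-1) + c)) := by
          push_cast; ring
        rw [key_eq]
        have t1 : (p:ℤ)^2 ∣ (lucasU P Q ((k+1)*r+1) - c^(k+1)) * lucasU P Q r := by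
          rw [pow_two]; exact mul_dvd_mul hL1 hrdvd
        have t2 : (p:ℤ)^2 ∣ (Q * lucasU P Q (r-1)) *
            (lucasU P Q ((k+1)*r) - ((k:ℤ)+1) * lucasU P Q r * c^k) := ih.mul_left _
        have t3 : (p:ℤ)^2 ∣ (((k:ℤ)+1)*c^k) * (lucasU P Q r * (Q * lucasU P Q (r-1) + c)) := by
          rw [pow_two]; exact (mul_dvd_mul hrdvd hcQ).mul_left _
        exact dvd_sub (dvd_sub t1 t2) t3
  -- U_r is exactly divisible by p
  have hUr2 : ¬ (p:ℤ)^2 ∣ lucasU P Q r := by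
    intro hq
    obtain ⟨k0, hk0⟩ := hrank n h1
    have hk0pos : k0 ≠ 0 := by rintro rfl; rw [mul_zero] at hk0; omega
    have hL2 := L2 (k0 - 1)
    rw [show (k0-1)+1 = k0 from by omega] at hL2
    apply h2
    have hnk : n = k0 * r := by rw [hk0, mul_comm]
    rw [hnk]
    have t : (p:ℤ)^2 ∣ (((k0-1:ℕ):ℤ)+1) * lucasU P Q r * c^(k0-1) :=
      (hq.mul_left _).mul_right _
    have := dvd_add hL2 t
    simpa using this
  refine ⟨hdvd1, ?_⟩
  intro hsq
  obtain ⟨t, ht⟩ := hrdvd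
  have hpt : ¬ (p:ℤ) ∣ t := by
    intro h
    apply hUr2
    rw [ht, pow_two]
    exact mul_dvd_mul_left _ h
  obtain ⟨k, hk⟩ := hrank mstar hdvd1
  have hkpos : k ≠ 0 := by rintro rfl; rw [mul_zero] at hk; omega
  have hL2 := L2 (k-1)
  rw [show (k-1)+1 = k from by omega] at hL2
  have hmst : mstar = k * r := by rw [hk, mul_comm]
  rw [hmst] at hsq
  have hdiv : (p:ℤ)^2 ∣ (((k-1:ℕ):ℤ) + 1) * lucasU P Q r * c^(k-1) := by
    have := dvd_sub hsq hL2
    simpa using this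
  rw [ht] at hdiv
  have hp0 : (p:ℤ) ≠ 0 := by exact_mod_cast hp.pos.ne'
  have hdiv2 : (p:ℤ) ∣ (((k-1:ℕ):ℤ) + 1) * t * c^(k-1) := by
    rw [show (((k-1:ℕ):ℤ) + 1) * ((p:ℤ) * t) * c^(k-1)
        = (p:ℤ) * ((((k-1:ℕ):ℤ) + 1) * t * c^(k-1)) from by ring, pow_two] at hdiv
    exact (mul_dvd_mul_iff_left hp0).mp hdiv
  rcases hpP.dvd_mul.mp hdiv2 with h | h
  · rcases hpP.dvd_mul.mp h with h' | h'
    · have hkc : ((k-1:ℕ):ℤ) + 1 = (k:ℕ) := by omega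
      rw [hkc] at h'
      have hdk : (p:ℕ) ∣ k := Int.natCast_dvd_natCast.mp h'
      have hkp : p ≤ k := Nat.le_of_dvd (by omega) hdk
      have hge := Nat.mul_le_mul hkp hr2
      omega
    · exact hpt h'
  · exact hpc (hpP.dvd_of_dvd_pow h)
end

section
/- For any fixed positive integer k, ∑_{n ≤ x} φ(nk)/(nk) = c(k)·x + O(log x), where c(k) = ∏_p (1 − gcd(p,k)/p²) > 0, the product over all primes p, and the implied constant depends on k. -/
open ArithmeticFunction Finset
open scoped ArithmeticFunction.Moebius ArithmeticFunction.zeta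

/-- `μ(d)/d^e` restricted to `d` coprime to `k`. -/
noncomputable def STRg (k e : ℕ) : ArithmeticFunction ℝ :=
  ⟨fun d => if Nat.Coprime d k then (μ d : ℝ) / (d : ℝ) ^ e else 0, by
    by_cases h : Nat.Coprime 0 k <;> simp [h]⟩

lemma STRg_apply (k e d : ℕ) :
    STRg k e d = if Nat.Coprime d k then (μ d : ℝ) / (d : ℝ) ^ e else 0 := rfl

lemma STRg_one (k e : ℕ) : STRg k e 1 = 1 := by
  simp [STRg_apply, Nat.coprime_one_left]

lemma STRg_mult (k e : ℕ) : (STRg k e).IsMultiplicative := by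
  constructor
  · exact STRg_one k e
  · intro m n hmn
    by_cases hm : Nat.Coprime m k
    · by_cases hn : Nat.Coprime n k
      · have hmnk : Nat.Coprime (m * n) k := Nat.Coprime.mul hm hn
        have hμ : μ (m * n) = μ m * μ n := isMultiplicative_moebius.2 hmn
        simp only [STRg_apply, if_pos hm, if_pos hn, if_pos hmnk, hμ]
        push_cast
        ring
      · have : ¬ Nat.Coprime (m * n) k := fun h =>
          hn (Nat.Coprime.coprime_dvd_left (dvd_mul_left n m) h)
        simp [STRg_apply, if_neg hn, if_neg this]
    · have : ¬ Nat.Coprime (m * n) k := fun h =>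
        hm (Nat.Coprime.coprime_dvd_left (dvd_mul_right m n) h)
      simp [STRg_apply, if_neg hm, if_neg this]

lemma STRg_abs_le (k e d : ℕ) : |STRg k e d| ≤ ((d : ℝ) ^ e)⁻¹ := by
  rcases eq_or_ne d 0 with rfl | hd
  · rcases eq_or_ne e 0 with rfl | he
    · simp only [STRg_apply, Nat.cast_zero, pow_zero, inv_one]
      split <;> simp
    · simp only [STRg_apply, Nat.cast_zero, zero_pow he, inv_zero, div_zero]
      split <;> simp
  · have hd1 : (1 : ℝ) ≤ (d : ℝ) := by exact_mod_cast Nat.one_le_iff_ne_zero.mpr hd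
    have hdpow : (0 : ℝ) < (d : ℝ) ^ e := by positivity
    rw [STRg_apply]
    split
    · rw [abs_div, abs_of_pos hdpow, div_le_iff₀ hdpow, inv_mul_cancel₀ hdpow.ne']
      have := abs_moebius_le_one (n := d)
      calc |((μ d : ℤ) : ℝ)| = ((|μ d| : ℤ) : ℝ) := by rw [Int.cast_abs]
        _ ≤ 1 := by exact_mod_cast this
    · simp [abs_nonneg, inv_nonneg.mpr hdpow.le]

lemma STRtotient_pk {p k : ℕ} (hp : p.Prime) (hpk : p ∣ k) :
    ∀ a : ℕ, Nat.totient (p ^ a * k) = p ^ a * Nat.totient k := by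
  intro a
  induction a with
  | zero => simp
  | succ a ih =>
    have h1 : p ^ (a + 1) * k = p * (p ^ a * k) := by ring
    have h2 : p ∣ p ^ a * k := Dvd.dvd.mul_left hpk _
    rw [h1, Nat.totient_mul_of_prime_of_dvd hp h2, ih]
    ring

lemma STRtotient_mul_mul {k m n : ℕ} (hk : 0 < k) (hm : 0 < m) (hn : 0 < n)
    (hmn : Nat.Coprime m n) :
    Nat.totient (m * n * k) * Nat.totient k = Nat.totient (m * k) * Nat.totient (n * k) := by
  set A := Nat.totient (Nat.gcd k n) with hA
  set G := Nat.gcd k n with hG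
  have hgcd : Nat.gcd (m * k) n = G := Nat.Coprime.gcd_mul_left_cancel k hmn
  have h1 := Nat.totient_gcd_mul_totient_mul (m * k) n
  rw [hgcd] at h1
  have h2 := Nat.totient_gcd_mul_totient_mul k n
  have hGpos : 0 < G := Nat.gcd_pos_of_pos_right k hn
  have hApos : 0 < A := Nat.totient_pos.mpr hGpos
  have hφn : 0 < Nat.totient n := Nat.totient_pos.mpr hn
  have key : (A * G * Nat.totient n) * (Nat.totient (m * n * k) * Nat.totient k)
      = (A * G * Nat.totient n) * (Nat.totient (m * k) * Nat.totient (n * k)) := by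
    have e1 : m * n * k = m * k * n := by ring
    have e2 : n * k = k * n := by ring
    rw [e1, e2]
    zify
    zify at h1 h2
    linear_combination (G : ℤ) * Nat.totient n * Nat.totient k * h1
      - (G : ℤ) * Nat.totient n * Nat.totient (m * k) * h2
  exact Nat.eq_of_mul_eq_mul_left (by positivity) key

/-- `n ↦ φ(nk)·k/(nk·φ(k))`. -/
noncomputable def STRF (k : ℕ) : ArithmeticFunction ℝ :=
  ⟨fun n => if n = 0 then 0 else
    (Nat.totient (n * k) : ℝ) * k / ((n * k : ℕ) * Nat.totient k), by simp⟩

lemma STRF_apply {k n : ℕ} (hn : n ≠ 0) :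
    STRF k n = (Nat.totient (n * k) : ℝ) * k / ((n * k : ℕ) * Nat.totient k) := by
  simp [STRF, hn]

lemma STRF_mult {k : ℕ} (hk : 0 < k) : (STRF k).IsMultiplicative := by
  have hφk : (0 : ℝ) < Nat.totient k := by exact_mod_cast Nat.totient_pos.mpr hk
  constructor
  · rw [STRF_apply one_ne_zero]
    rw [one_mul]
    field_simp
  · intro m n hmn
    rcases eq_or_ne m 0 with rfl | hm
    · simp [STRF]
    rcases eq_or_ne n 0 with rfl | hn
    · simp [STRF]
    have hmn0 : m * n ≠ 0 := mul_ne_zero hm hn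
    rw [STRF_apply hmn0, STRF_apply hm, STRF_apply hn]
    have hkey := STRtotient_mul_mul hk (Nat.pos_of_ne_zero hm) (Nat.pos_of_ne_zero hn) hmn
    have hkeyR : (Nat.totient (m * n * k) : ℝ) * Nat.totient k
        = Nat.totient (m * k) * Nat.totient (n * k) := by exact_mod_cast hkey
    have hmpos : (0:ℝ) < m := by exact_mod_cast Nat.pos_of_ne_zero hm
    have hnpos : (0:ℝ) < n := by exact_mod_cast Nat.pos_of_ne_zero hn
    have hkpos : (0:ℝ) < k := by exact_mod_cast hk
    push_cast
    rw [div_mul_div_comm, div_eq_div_iff (by positivity) (by positivity)]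
    linear_combination (↑m * ↑n * (k:ℝ) ^ 3 * (Nat.totient k : ℝ)) * hkeyR

lemma STRsum_divisors_prime_pow {p : ℕ} (hp : p.Prime) {a : ℕ} (ha : a ≠ 0) (k e : ℕ) :
    ∑ d ∈ (p ^ a).divisors, STRg k e d = 1 + STRg k e p := by
  rw [Nat.divisors_prime_pow hp, Finset.sum_map]
  simp only [Function.Embedding.coeFn_mk]
  have hsub : Finset.range 2 ⊆ Finset.range (a + 1) := by
    apply Finset.range_subset_range.mpr
    omega
  have hz : ∀ j ∈ Finset.range (a + 1), j ∉ Finset.range 2 →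
      STRg k e (p ^ j) = 0 := by
    intro j _ hj2
    have hj : j ≠ 0 ∧ j ≠ 1 := by simp at hj2; omega
    have : μ (p ^ j) = 0 := by
      rw [moebius_apply_prime_pow hp hj.1]
      simp [hj.2]
    rw [STRg_apply, this]
    simp
  rw [← Finset.sum_subset hsub hz]
  rw [Finset.sum_range_succ, Finset.sum_range_one]
  simp only [Function.Embedding.coeFn_mk, pow_zero, pow_one, STRg_one]

lemma STRF_eq {k : ℕ} (hk : 0 < k) : STRF k = ↑ζ * STRg k 1 := by
  have hφk : (0 : ℝ) < Nat.totient k := by exact_mod_cast Nat.totient_pos.mpr hk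
  have hkR : (0 : ℝ) < k := by exact_mod_cast hk
  have hζg : (↑ζ * STRg k 1).IsMultiplicative :=
    (isMultiplicative_zeta.natCast).mul (STRg_mult k 1)
  rw [ArithmeticFunction.IsMultiplicative.eq_iff_eq_on_prime_powers _ (STRF_mult hk) _ hζg]
  intro p i hp
  rcases eq_or_ne i 0 with rfl | hi
  · rw [pow_zero, (STRF_mult hk).map_one, hζg.map_one]
  have hppos : 0 < p := hp.pos
  have hpR : (0:ℝ) < p := by exact_mod_cast hppos
  rw [coe_zeta_mul_apply, STRsum_divisors_prime_pow hp hi k 1]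
  have hpi0 : p ^ i ≠ 0 := pow_ne_zero _ hppos.ne'
  rw [STRF_apply hpi0]
  by_cases hpk : p ∣ k
  · have hcop : ¬ Nat.Coprime p k := fun h =>
      ((Nat.Prime.coprime_iff_not_dvd hp).mp h) hpk
    rw [STRg_apply, if_neg hcop, STRtotient_pk hp hpk i]
    push_cast
    field_simp
    ring
  · have hcop : Nat.Coprime p k := (Nat.Prime.coprime_iff_not_dvd hp).mpr hpk
    have hcopi : Nat.Coprime (p ^ i) k := Nat.Coprime.pow_left _ hcop
    rw [STRg_apply, if_pos hcop, Nat.totient_mul hcopi,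
      Nat.totient_prime_pow hp (Nat.pos_of_ne_zero hi),
      moebius_apply_prime hp]
    have hp1 : (1:ℝ) ≤ p := by exact_mod_cast hp.one_le
    have hcast : ((p - 1 : ℕ) : ℝ) = (p : ℝ) - 1 := by
      push_cast [Nat.cast_sub hp.one_le]; ring
    push_cast [hcast]
    have hpow : (p:ℝ) ^ i = (p:ℝ) ^ (i - 1) * p := by
      conv_lhs => rw [show i = (i-1) + 1 by omega]
      ring
    rw [hpow]
    field_simp
    ring

lemma STRkey {k : ℕ} (hk : 0 < k) {n : ℕ} (hn : n ≠ 0) :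
    (Nat.totient (n * k) : ℝ) / ((n : ℝ) * k) =
      ((Nat.totient k : ℝ) / k) * ∑ d ∈ n.divisors, STRg k 1 d := by
  have hφk : (0 : ℝ) < Nat.totient k := by exact_mod_cast Nat.totient_pos.mpr hk
  have hkR : (0 : ℝ) < k := by exact_mod_cast hk
  have hnR : (0 : ℝ) < n := by exact_mod_cast Nat.pos_of_ne_zero hn
  have h1 : STRF k n = ∑ d ∈ n.divisors, STRg k 1 d := by
    rw [STRF_eq hk, coe_zeta_mul_apply]
  rw [← h1, STRF_apply hn]
  push_cast
  field_simp

lemma STRswap (G : ℕ → ℝ) (N : ℕ) :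
    ∑ n ∈ Finset.Icc 1 N, ∑ d ∈ n.divisors, G d
      = ∑ d ∈ Finset.Icc 1 N, ((N / d : ℕ) : ℝ) * G d := by
  have h1 : ∀ n ∈ Finset.Icc 1 N, ∑ d ∈ n.divisors, G d
      = ∑ d ∈ Finset.Icc 1 N, if d ∣ n then G d else 0 := by
    intro n hn
    rw [Finset.mem_Icc] at hn
    rw [← Finset.sum_filter]
    apply (Finset.sum_congr _ (fun x _ => rfl)).symm
    ext d
    simp only [Finset.mem_filter, Finset.mem_Icc, Nat.mem_divisors]
    constructor
    · rintro ⟨-, hdvd⟩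
      exact ⟨hdvd, by omega⟩
    · rintro ⟨hdvd, -⟩
      exact ⟨⟨Nat.pos_of_dvd_of_pos hdvd hn.1, le_trans (Nat.le_of_dvd hn.1 hdvd) hn.2⟩, hdvd⟩
  rw [Finset.sum_congr rfl h1, Finset.sum_comm]
  apply Finset.sum_congr rfl
  intro d _
  rw [← Finset.sum_filter, Finset.sum_const]
  have hc : (Finset.filter (fun a => d ∣ a) (Finset.Icc 1 N)).card = N / d := by
    rw [show Finset.Icc 1 N = Finset.Ioc 0 N from by rw [← Finset.Icc_add_one_left_eq_Ioc, zero_add]]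
    exact Nat.Ioc_filter_dvd_card_eq_div N d
  rw [hc, nsmul_eq_mul]

lemma STRsummable_q : Summable (fun d : ℕ => ((d : ℝ) ^ 2)⁻¹) :=
  Real.summable_nat_pow_inv.mpr one_lt_two

lemma STRsummable_norm (k : ℕ) : Summable (fun d => ‖STRg k 2 d‖) := by
  apply Summable.of_nonneg_of_le (fun d => norm_nonneg _) _ STRsummable_q
  intro d
  rw [Real.norm_eq_abs]
  exact STRg_abs_le k 2 d

lemma STRsummable (k : ℕ) : Summable (fun d => STRg k 2 d) :=
  (STRsummable_norm k).of_norm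

lemma STRsq_sum_le {N : ℕ} (hN : 1 ≤ N) (s : Finset ℕ) (hs : ∀ d ∈ s, N < d) :
    ∑ d ∈ s, ((d : ℝ) ^ 2)⁻¹ ≤ (N : ℝ)⁻¹ := by
  have hNR : (0 : ℝ) < N := by exact_mod_cast hN
  set M := s.sup _root_.id ⊔ N with hM
  have hMN : N ≤ M := le_sup_right
  have hsub : s ⊆ Finset.Ioc N M := by
    intro d hd
    rw [Finset.mem_Ioc]
    exact ⟨hs d hd, le_trans (Finset.le_sup (f := _root_.id) hd) le_sup_left⟩
  calc ∑ d ∈ s, ((d : ℝ) ^ 2)⁻¹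
      ≤ ∑ d ∈ Finset.Ioc N M, ((d : ℝ) ^ 2)⁻¹ :=
        Finset.sum_le_sum_of_subset_of_nonneg hsub (fun i _ _ => by positivity)
    _ ≤ (N : ℝ)⁻¹ - (M : ℝ)⁻¹ := by
        clear hsub hM
        clear_value M
        induction M, hMN using Nat.le_induction with
        | base => simp
        | succ M hM ih =>
          rw [Finset.sum_Ioc_succ_top (by omega)]
          have hMR : (0 : ℝ) < M := lt_of_lt_of_le hNR (by exact_mod_cast hM)
          have hstep : (((M + 1 : ℕ) : ℝ) ^ 2)⁻¹ ≤ (M : ℝ)⁻¹ - ((M + 1 : ℕ) : ℝ)⁻¹ := by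
            push_cast
            have h1 : ((M : ℝ) + 1) ^ 2 ≠ 0 := by positivity
            have h2 : (M : ℝ) * ((M : ℝ) + 1) ≠ 0 := by positivity
            rw [inv_eq_one_div, inv_eq_one_div, inv_eq_one_div,
              div_sub_div _ _ (ne_of_gt hMR) (by positivity),
              div_le_div_iff₀ (by positivity) (by positivity)]
            ring_nf
            nlinarith [hMR]
          push_cast
          push_cast at ih hstep
          linarith
    _ ≤ (N : ℝ)⁻¹ := by
        have : (0:ℝ) ≤ (M : ℝ)⁻¹ := by positivity
        linarith

lemma STRtail (k : ℕ) {N : ℕ} (hN : 1 ≤ N) :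
    |(∑' d, STRg k 2 d) - ∑ d ∈ Finset.Icc 1 N, STRg k 2 d| ≤ (N : ℝ)⁻¹ := by
  classical
  set q : ℕ → ℝ := fun d => if d ∈ Finset.Icc 1 N then 0 else STRg k 2 d with hq
  set r : ℕ → ℝ := fun d => if d ∈ Finset.Icc 1 N then STRg k 2 d else 0 with hr
  have hq_mem : ∀ d, d ∈ Finset.Icc 1 N → q d = 0 := fun d h => if_pos h
  have hq_not : ∀ d, d ∉ Finset.Icc 1 N → q d = STRg k 2 d := fun d h => if_neg h
  have hr_mem : ∀ d, d ∈ Finset.Icc 1 N → r d = STRg k 2 d := fun d h => if_pos h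
  have hr_not : ∀ d, d ∉ Finset.Icc 1 N → r d = 0 := fun d h => if_neg h
  have hpt : ∀ d, STRg k 2 d = r d + q d := by
    intro d
    by_cases h : d ∈ Finset.Icc 1 N
    · rw [hq_mem d h, hr_mem d h, add_zero]
    · rw [hq_not d h, hr_not d h, zero_add]
  have habsq : ∀ d, ‖q d‖ ≤ ‖STRg k 2 d‖ := by
    intro d
    by_cases h : d ∈ Finset.Icc 1 N
    · rw [hq_mem d h]; simp
    · rw [hq_not d h]
  have habsr : ∀ d, ‖r d‖ ≤ ‖STRg k 2 d‖ := by
    intro d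
    by_cases h : d ∈ Finset.Icc 1 N
    · rw [hr_mem d h]
    · rw [hr_not d h]; simp
  have hsumq : Summable q := Summable.of_norm_bounded (STRsummable_norm k) habsq
  have hsumr : Summable r := Summable.of_norm_bounded (STRsummable_norm k) habsr
  have htsum : (∑' d, STRg k 2 d) = (∑' d, r d) + ∑' d, q d := by
    rw [← Summable.tsum_add hsumr hsumq]
    exact tsum_congr hpt
  have htr : (∑' d, r d) = ∑ d ∈ Finset.Icc 1 N, STRg k 2 d := by
    rw [tsum_eq_sum (s := Finset.Icc 1 N) hr_not]
    exact Finset.sum_congr rfl hr_mem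
  rw [htsum, htr, add_sub_cancel_left]
  have hnormq : Summable (fun d => ‖q d‖) := by
    apply Summable.of_nonneg_of_le (fun d => norm_nonneg _) _ STRsummable_q
    intro d
    by_cases h : d ∈ Finset.Icc 1 N
    · rw [hq_mem d h]
      simp only [norm_zero]
      positivity
    · rw [hq_not d h, Real.norm_eq_abs]
      exact STRg_abs_le k 2 d
  have h1 : ‖∑' d, q d‖ ≤ ∑' d, ‖q d‖ := norm_tsum_le_tsum_norm hnormq
  have h2 : (∑' d, ‖q d‖) ≤ (N : ℝ)⁻¹ := by
    apply Summable.tsum_le_of_sum_le hnormq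
    intro s
    have hterm : ∀ d ∈ s, ‖q d‖ ≤ if N < d then ((d : ℝ) ^ 2)⁻¹ else 0 := by
      intro d _
      by_cases h : d ∈ Finset.Icc 1 N
      · have hnd : ¬ N < d := by rw [Finset.mem_Icc] at h; omega
        rw [hq_mem d h, if_neg hnd, norm_zero]
      · rw [hq_not d h]
        rw [Finset.mem_Icc] at h
        by_cases hd : N < d
        · rw [if_pos hd, Real.norm_eq_abs]
          exact STRg_abs_le k 2 d
        · have hd0 : d = 0 := by omega
          subst hd0
          rw [if_neg hd, Real.norm_eq_abs]
          have := STRg_abs_le k 2 0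
          simpa using this
    calc ∑ d ∈ s, ‖q d‖ ≤ ∑ d ∈ s, if N < d then ((d : ℝ) ^ 2)⁻¹ else 0 :=
          Finset.sum_le_sum hterm
      _ = ∑ d ∈ s.filter (N < ·), ((d : ℝ) ^ 2)⁻¹ := by rw [← Finset.sum_filter]
      _ ≤ (N : ℝ)⁻¹ := STRsq_sum_le hN _ (fun d hd => (Finset.mem_filter.mp hd).2)
  rw [← Real.norm_eq_abs]
  exact h1.trans h2

lemma STReuler (k : ℕ) :
    HasProd (fun p : Nat.Primes => 1 + STRg k 2 (p : ℕ)) (∑' d, STRg k 2 d) := by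
  have h := (STRg_mult k 2).eulerProduct_hasProd (STRsummable_norm k)
  have heq : ∀ p : Nat.Primes, (∑' e : ℕ, STRg k 2 ((p : ℕ) ^ e)) = 1 + STRg k 2 (p : ℕ) := by
    intro p
    have hp : (p : ℕ).Prime := p.2
    have hz : ∀ j ∉ ({0, 1} : Finset ℕ), STRg k 2 ((p : ℕ) ^ j) = 0 := by
      intro j hj
      simp only [Finset.mem_insert, Finset.mem_singleton] at hj
      push_neg at hj
      have : μ ((p : ℕ) ^ j) = 0 := by
        rw [moebius_apply_prime_pow hp hj.1]
        simp [hj.2]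
      rw [STRg_apply, this]
      simp
    rw [tsum_eq_sum hz]
    rw [show ({0, 1} : Finset ℕ) = insert 0 {1} from rfl, Finset.sum_insert (by simp),
      Finset.sum_singleton, pow_zero, pow_one, STRg_one]
  rw [← funext heq]
  exact h

lemma STRhasProd_b {k : ℕ} (hk : 0 < k) :
    HasProd (fun p : Nat.Primes => if (p : ℕ) ∣ k then 1 - ((p : ℕ) : ℝ)⁻¹ else 1)
      ((Nat.totient k : ℝ) / k) := by
  classical
  set f : ℕ → ℝ := fun n => if n ∣ k then 1 - (n : ℝ)⁻¹ else 1 with hf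
  set s : Finset Nat.Primes := k.primeFactors.subtype Nat.Prime with hs
  have hone : ∀ q : Nat.Primes, q ∉ s → f (q : ℕ) = 1 := by
    intro q hq
    rw [hs] at hq
    replace hq : ¬ (q : ℕ) ∈ k.primeFactors := fun h => hq (Finset.mem_subtype.mpr h)
    have : ¬ (q : ℕ) ∣ k := by
      intro hdvd
      exact hq (Nat.mem_primeFactors.mpr ⟨q.2, hdvd, hk.ne'⟩)
    rw [hf]
    simp [this]
  have hprod := hasProd_prod_of_ne_finset_one (f := fun p : Nat.Primes => f (p : ℕ)) (s := s) (L := SummationFilter.unconditional _) hone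
  have hval : ∏ p ∈ s, f (p : ℕ) = (Nat.totient k : ℝ) / k := by
    have e1 : ∏ p ∈ s, f (p : ℕ) = ∏ p ∈ k.primeFactors.filter Nat.Prime, f p :=
      Finset.prod_subtype_eq_prod_filter f
    rw [e1, Finset.filter_true_of_mem (fun p hp => Nat.prime_of_mem_primeFactors hp)]
    have h1 : ∀ p ∈ k.primeFactors, f p = 1 - (p : ℝ)⁻¹ := by
      intro p hp
      rw [hf]
      simp [Nat.dvd_of_mem_primeFactors hp]
    rw [Finset.prod_congr rfl h1]
    have hQ := Nat.totient_eq_mul_prod_factors k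
    have hR : (Nat.totient k : ℝ) = k * ∏ p ∈ k.primeFactors, (1 - (p : ℝ)⁻¹) := by
      have := congrArg (fun q : ℚ => (q : ℝ)) hQ
      push_cast at this
      exact this
    have hkR : (0 : ℝ) < k := by exact_mod_cast hk
    rw [hR]
    field_simp
  rw [← hval]
  exact hprod

lemma STRhasProd_c {k : ℕ} (hk : 0 < k) :
    HasProd (fun p : Nat.Primes => 1 - (Nat.gcd (p : ℕ) k : ℝ) / ((p : ℕ) : ℝ) ^ 2)
      ((∑' d, STRg k 2 d) * ((Nat.totient k : ℝ) / k)) := by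
  have h := (STReuler k).mul (STRhasProd_b hk)
  have heq : ∀ p : Nat.Primes,
      (1 + STRg k 2 (p : ℕ)) * (if (p : ℕ) ∣ k then 1 - ((p : ℕ) : ℝ)⁻¹ else 1)
        = 1 - (Nat.gcd (p : ℕ) k : ℝ) / ((p : ℕ) : ℝ) ^ 2 := by
    intro p
    have hp : (p : ℕ).Prime := p.2
    have hpR : (0 : ℝ) < ((p : ℕ) : ℝ) := by exact_mod_cast hp.pos
    by_cases hpk : (p : ℕ) ∣ k
    · have hcop : ¬ Nat.Coprime (p : ℕ) k := fun h' =>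
        ((Nat.Prime.coprime_iff_not_dvd hp).mp h') hpk
      have hgcd : Nat.gcd (p : ℕ) k = (p : ℕ) := Nat.gcd_eq_left hpk
      rw [STRg_apply, if_neg hcop, if_pos hpk, hgcd]
      field_simp
      ring
    · have hcop : Nat.Coprime (p : ℕ) k := (Nat.Prime.coprime_iff_not_dvd hp).mpr hpk
      have hgcd : Nat.gcd (p : ℕ) k = 1 := hcop
      rw [STRg_apply, if_pos hcop, if_neg hpk, hgcd, moebius_apply_prime hp]
      push_cast
      ring
  rw [← funext heq]
  exact h

lemma STRT_pos (k : ℕ) : 0 < ∑' d, STRg k 2 d := by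
  have htail := STRtail k (N := 3) (by norm_num)
  have h1 : STRg k 2 1 = 1 := STRg_one k 2
  have h2 : |STRg k 2 2| ≤ (((2 : ℕ) : ℝ) ^ 2)⁻¹ := STRg_abs_le k 2 2
  have h3 : |STRg k 2 3| ≤ (((3 : ℕ) : ℝ) ^ 2)⁻¹ := STRg_abs_le k 2 3
  have hsum : ∑ d ∈ Finset.Icc 1 3, STRg k 2 d = STRg k 2 1 + STRg k 2 2 + STRg k 2 3 := by
    rw [show Finset.Icc 1 3 = {1, 2, 3} from rfl]
    rw [Finset.sum_insert (by decide), Finset.sum_insert (by decide), Finset.sum_singleton]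
    ring
  rw [hsum, h1] at htail
  rw [abs_le] at htail
  push_cast at htail h2 h3
  rw [abs_le] at h2 h3
  norm_num at htail h2 h3 ⊢
  linarith

lemma STRg12 {k d : ℕ} (hd : d ≠ 0) : STRg k 1 d / d = STRg k 2 d := by
  have hdR : ((d : ℝ)) ≠ 0 := by exact_mod_cast hd
  rw [STRg_apply, STRg_apply]
  split
  · rw [div_div, pow_one]
    congr 1
    ring
  · rw [zero_div]

lemma STRharmonic (N : ℕ) : ∑ d ∈ Finset.Icc 1 N, ((d : ℝ))⁻¹ ≤ 1 + Real.log N := by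
  have h := harmonic_le_one_add_log N
  rw [harmonic_eq_sum_Icc] at h
  push_cast at h
  exact h

/-- `∑_{n ≤ x} φ(nk)/(nk) = c(k) x + O(log x)` with
`c(k) = ∏_p (1 - gcd(p,k)/p²) > 0`. -/
theorem sum_totient_ratio_asymptotic (k : ℕ) (hk : 0 < k) :
    0 < (∏' p : Nat.Primes, (1 - (Nat.gcd p k : ℝ) / (p : ℝ) ^ 2)) ∧
    ∃ C : ℝ, ∀ x : ℝ, 2 ≤ x →
      |(∑ n ∈ Finset.Icc 1 ⌊x⌋₊, (Nat.totient (n * k) : ℝ) / (n * k : ℝ)) -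
        (∏' p : Nat.Primes, (1 - (Nat.gcd p k : ℝ) / (p : ℝ) ^ 2)) * x|
        ≤ C * Real.log x := by
  have hφk : (0 : ℝ) < Nat.totient k := by exact_mod_cast Nat.totient_pos.mpr hk
  have hkR : (0 : ℝ) < k := by exact_mod_cast hk
  have hratio_le : (Nat.totient k : ℝ) / k ≤ 1 := by
    rw [div_le_one hkR]
    exact_mod_cast Nat.totient_le k
  set T := ∑' d, STRg k 2 d with hT
  have hc : (∏' p : Nat.Primes, (1 - (Nat.gcd p k : ℝ) / (p : ℝ) ^ 2))
      = T * ((Nat.totient k : ℝ) / k) := (STRhasProd_c hk).tprod_eq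
  have hTpos : 0 < T := STRT_pos k
  constructor
  · rw [hc]
    exact mul_pos hTpos (div_pos hφk hkR)
  refine ⟨8, fun x hx => ?_⟩
  set N := ⌊x⌋₊ with hN
  have hx0 : (0 : ℝ) ≤ x := by linarith
  have hN2 : 2 ≤ N := Nat.le_floor (by exact_mod_cast hx)
  have hN1 : 1 ≤ N := by omega
  have hNx : (N : ℝ) ≤ x := Nat.floor_le hx0
  have hxN : x < N + 1 := Nat.lt_floor_add_one x
  have hNR : (0 : ℝ) < N := by exact_mod_cast (by omega : 0 < N)
  set P := ∑ d ∈ Finset.Icc 1 N, STRg k 2 d with hP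
  set E := ∑ d ∈ Finset.Icc 1 N, (((N / d : ℕ) : ℝ) - x / d) * STRg k 1 d with hE
  have hS : ∑ n ∈ Finset.Icc 1 N, (Nat.totient (n * k) : ℝ) / (n * k : ℝ)
      = ((Nat.totient k : ℝ) / k) * ∑ d ∈ Finset.Icc 1 N, ((N / d : ℕ) : ℝ) * STRg k 1 d := by
    rw [← STRswap, Finset.mul_sum]
    apply Finset.sum_congr rfl
    intro n hn
    rw [Finset.mem_Icc] at hn
    have hn1 : n ≠ 0 := by omega
    have := STRkey hk hn1
    push_cast
    push_cast at this
    exact this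
  have hsplit : ∑ d ∈ Finset.Icc 1 N, ((N / d : ℕ) : ℝ) * STRg k 1 d = x * P + E := by
    rw [hP, hE, Finset.mul_sum, ← Finset.sum_add_distrib]
    apply Finset.sum_congr rfl
    intro d hd
    rw [Finset.mem_Icc] at hd
    have hd0 : d ≠ 0 := by omega
    have hdR : (0 : ℝ) < d := by exact_mod_cast (by omega : 0 < d)
    have h12 : STRg k 2 d = STRg k 1 d / d := (STRg12 hd0).symm
    rw [h12]
    field_simp
    ring
  have habs_coef : ∀ d ∈ Finset.Icc 1 N, |((N / d : ℕ) : ℝ) - x / d| ≤ 1 := by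
    intro d hd
    rw [Finset.mem_Icc] at hd
    have hdR : (0 : ℝ) < d := by exact_mod_cast (by omega : 0 < d)
    have hmod := Nat.div_add_mod N d
    have hr : N % d < d := Nat.mod_lt _ (by omega)
    have hq : (d : ℝ) * ((N / d : ℕ) : ℝ) + ((N % d : ℕ) : ℝ) = N := by
      exact_mod_cast hmod
    rw [abs_le]
    constructor
    · -- -(1) ≤ q - x/d  ⟸  x/d ≤ q + 1 ⟸ x < d*q + d
      rw [neg_le, neg_sub, sub_le_iff_le_add, div_le_iff₀ hdR]
      have : ((N % d : ℕ) : ℝ) + 1 ≤ d := by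
        have : N % d + 1 ≤ d := hr
        exact_mod_cast this
      nlinarith
    · -- q - x/d ≤ 0 ≤ 1
      have hqle : ((N / d : ℕ) : ℝ) ≤ x / d := by
        rw [le_div_iff₀ hdR]
        have : ((N % d : ℕ) : ℝ) ≥ 0 := by positivity
        nlinarith
      linarith
  have hEbound : |E| ≤ 1 + Real.log x := by
    calc |E| ≤ ∑ d ∈ Finset.Icc 1 N, |(((N / d : ℕ) : ℝ) - x / d) * STRg k 1 d| :=
          Finset.abs_sum_le_sum_abs _ _
      _ ≤ ∑ d ∈ Finset.Icc 1 N, ((d : ℝ))⁻¹ := by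
          apply Finset.sum_le_sum
          intro d hd
          rw [abs_mul]
          have h1 := habs_coef d hd
          have h2 : |STRg k 1 d| ≤ ((d : ℝ))⁻¹ := by
            have := STRg_abs_le k 1 d
            rwa [pow_one] at this
          calc |((N / d : ℕ) : ℝ) - x / d| * |STRg k 1 d|
              ≤ 1 * ((d : ℝ))⁻¹ := by
                apply mul_le_mul h1 h2 (abs_nonneg _) zero_le_one
            _ = ((d : ℝ))⁻¹ := one_mul _
      _ ≤ 1 + Real.log N := STRharmonic N
      _ ≤ 1 + Real.log x := by
          have := Real.log_le_log hNR hNx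
          linarith
  have hPT : |T - P| ≤ (N : ℝ)⁻¹ := STRtail k hN1
  have hxNlt : x * (N : ℝ)⁻¹ ≤ 2 := by
    rw [mul_inv_le_iff₀ hNR]
    have : (N : ℝ) + 1 ≤ 2 * N := by
      have : (1 : ℝ) ≤ N := by exact_mod_cast hN1
      linarith
    linarith
  have hmain : (∑ n ∈ Finset.Icc 1 N, (Nat.totient (n * k) : ℝ) / (n * k : ℝ))
      - (∏' p : Nat.Primes, (1 - (Nat.gcd p k : ℝ) / (p : ℝ) ^ 2)) * x
      = ((Nat.totient k : ℝ) / k) * (E - x * (T - P)) := by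
    rw [hS, hsplit, hc]
    ring
  rw [hmain, abs_mul]
  have hd1 : |(Nat.totient k : ℝ) / k| ≤ 1 := by
    rw [abs_of_pos (div_pos hφk hkR)]
    exact hratio_le
  have hd2 : |E - x * (T - P)| ≤ 3 + Real.log x := by
    calc |E - x * (T - P)| ≤ |E| + |x * (T - P)| := abs_sub _ _
      _ = |E| + x * |T - P| := by rw [abs_mul, abs_of_nonneg hx0]
      _ ≤ (1 + Real.log x) + x * (N : ℝ)⁻¹ := by
          have := mul_le_mul_of_nonneg_left hPT hx0
          linarith
      _ ≤ 3 + Real.log x := by linarith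
  have hlog2 : (0.6931471803 : ℝ) < Real.log 2 := Real.log_two_gt_d9
  have hlogx : Real.log 2 ≤ Real.log x := Real.log_le_log (by norm_num) hx
  calc |(Nat.totient k : ℝ) / k| * |E - x * (T - P)|
      ≤ 1 * (3 + Real.log x) := by
        apply mul_le_mul hd1 hd2 (abs_nonneg _) zero_le_one
    _ = 3 + Real.log x := one_mul _
    _ ≤ 8 * Real.log x := by linarith
end

section
/- Let k ≥ 2 and c(k) = ∏_p(1 − gcd(p,k)/p²). The set T = {n ∈ ℕ : φ(nk) > (2c(k)/3)·nk} has positive lower density; in fact |T ∩ [1,x]| ≫_k x. -/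
open Finset Filter Topology

section auxfile

open Finset Filter Topology

variable {β : Type*}

lemma aux_one_sub_sum_le_prod (s : Finset β) (f : β → ℝ) (h0 : ∀ i ∈ s, 0 ≤ f i)
    (h1 : ∀ i ∈ s, f i ≤ 1) : 1 - ∑ i ∈ s, f i ≤ ∏ i ∈ s, (1 - f i) := by
  induction s using Finset.cons_induction with
  | empty => simp
  | cons a s ha ih =>
    rw [Finset.prod_cons, Finset.sum_cons]
    have h0a := h0 a (Finset.mem_cons_self a s)
    have h1a := h1 a (Finset.mem_cons_self a s)
    have ih' := ih (fun i hi => h0 i (Finset.mem_cons_of_mem hi))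
      (fun i hi => h1 i (Finset.mem_cons_of_mem hi))
    have hs0 : 0 ≤ ∑ i ∈ s, f i := Finset.sum_nonneg fun i hi => h0 i (Finset.mem_cons_of_mem hi)
    nlinarith
lemma aux_one_add_sum_le_prod (s : Finset β) (f : β → ℝ) (h0 : ∀ i ∈ s, 0 ≤ f i) :
    1 + ∑ i ∈ s, f i ≤ ∏ i ∈ s, (1 + f i) := by
  induction s using Finset.cons_induction with
  | empty => simp
  | cons a s ha ih =>
    rw [Finset.prod_cons, Finset.sum_cons]
    have h0a := h0 a (Finset.mem_cons_self a s)
    have ih' := ih (fun i hi => h0 i (Finset.mem_cons_of_mem hi))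
    have hs0 : 0 ≤ ∑ i ∈ s, f i := Finset.sum_nonneg fun i hi => h0 i (Finset.mem_cons_of_mem hi)
    nlinarith
lemma aux_multipliable (f : β → ℝ) (h0 : ∀ i, 0 ≤ f i) (h1 : ∀ i, f i ≤ 1) :
    Multipliable f := by
  classical
  refine ⟨⨅ s : Finset β, ∏ i ∈ s, f i, tendsto_atTop_ciInf ?_ ?_⟩
  · intro s t hst
    simp only
    rw [← Finset.prod_sdiff hst]
    exact mul_le_of_le_one_left (Finset.prod_nonneg fun i _ => h0 i)
      (Finset.prod_le_one (fun i _ => h0 i) (fun i _ => h1 i))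
  · exact ⟨0, by rintro y ⟨s, rfl⟩; exact Finset.prod_nonneg fun i _ => h0 i⟩
lemma aux_multipliable_one_add (a : β → ℝ) (h0 : ∀ i, 0 ≤ a i) (hs : Summable a)
    (hlt : ∑' i, a i < 1) : Multipliable (fun i => 1 + a i) := by
  have hub : ∀ s : Finset β, ∏ i ∈ s, (1 + a i) ≤ (1 - ∑' i, a i)⁻¹ := by
    intro s
    have hsum : ∑ i ∈ s, a i ≤ ∑' i, a i := Summable.sum_le_tsum s (fun i _ => h0 i) hs
    have h1 : ∀ i, a i ≤ 1 := fun i =>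
      le_trans (le_trans (Summable.le_tsum hs i fun _ _ => h0 _) hlt.le) le_rfl
    have hprod : (∏ i ∈ s, (1 - a i)) * (∏ i ∈ s, (1 + a i)) ≤ 1 := by
      rw [← Finset.prod_mul_distrib]
      refine Finset.prod_le_one (fun i _ => by nlinarith [h0 i, h1 i]) (fun i _ => by nlinarith [h0 i, h1 i])
    have hlb : 1 - ∑' i, a i ≤ ∏ i ∈ s, (1 - a i) :=
      le_trans (by linarith) (aux_one_sub_sum_le_prod s a (fun i _ => h0 i) (fun i _ => h1 i))
    have hpos : 0 < 1 - ∑' i, a i := by linarith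
    have hP : 0 ≤ ∏ i ∈ s, (1 + a i) := Finset.prod_nonneg fun i _ => by nlinarith [h0 i]
    rw [← one_div, le_div_iff₀ hpos]
    nlinarith
  refine ⟨⨆ s : Finset β, ∏ i ∈ s, (1 + a i), tendsto_atTop_ciSup ?_ ?_⟩
  · intro s t hst
    simp only
    classical
    have h1le : (1:ℝ) ≤ ∏ i ∈ t \ s, (1 + a i) := by
      calc (1:ℝ) = ∏ i ∈ t \ s, 1 := by simp
        _ ≤ ∏ i ∈ t \ s, (1 + a i) := Finset.prod_le_prod (by simp) (fun i _ => by nlinarith [h0 i])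
    calc ∏ i ∈ s, (1 + a i) = 1 * ∏ i ∈ s, (1 + a i) := (one_mul _).symm
      _ ≤ (∏ i ∈ t \ s, (1 + a i)) * ∏ i ∈ s, (1 + a i) :=
          mul_le_mul_of_nonneg_right h1le
            (Finset.prod_nonneg fun i _ => by nlinarith [h0 i])
      _ = ∏ i ∈ t, (1 + a i) := Finset.prod_sdiff hst
  · exact ⟨(1 - ∑' i, a i)⁻¹, by rintro y ⟨s, rfl⟩; exact hub s⟩

lemma aux_hasSum_u : HasSum (fun n : ℕ => (((n:ℝ)+1) * ((n:ℝ)+2))⁻¹) 1 := by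
  rw [hasSum_iff_tendsto_nat_of_nonneg (fun i => by positivity)]
  have hpart : ∀ n : ℕ, ∑ j ∈ Finset.range n, (((j:ℝ)+1)*((j:ℝ)+2))⁻¹ = 1 - ((n:ℝ)+1)⁻¹ := by
    intro n; induction n with
    | zero => simp
    | succ n ih =>
      rw [Finset.sum_range_succ, ih]
      have h1 : ((n:ℝ)+1) ≠ 0 := by positivity
      have h2 : ((n:ℝ)+2) ≠ 0 := by positivity
      push_cast
      field_simp
      ring
  simp only [hpart]
  have h := tendsto_one_div_add_atTop_nhds_zero_nat (𝕜 := ℝ)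
  have h2 : Tendsto (fun n : ℕ => 1 - 1 / ((n:ℝ)+1)) atTop (𝓝 (1 - 0)) :=
    tendsto_const_nhds.sub h
  simp only [sub_zero] at h2
  convert h2 using 2 with n
  rw [one_div]

noncomputable def auxM : ℕ → ℝ := fun j => if j = 0 then 1/4 else ((2*(j:ℝ))*(2*(j:ℝ)+2))⁻¹

lemma aux_M_succ (j : ℕ) : auxM (j+1) = (1/4) * (((j:ℝ)+1) * ((j:ℝ)+2))⁻¹ := by
  simp only [auxM, Nat.succ_ne_zero, if_false]
  push_cast
  rw [show (2*((j:ℝ)+1))*(2*((j:ℝ)+1)+2) = 4*(((j:ℝ)+1)*((j:ℝ)+2)) by ring, mul_inv]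
  norm_num

lemma aux_M_summable : Summable auxM := by
  rw [← summable_nat_add_iff 1]
  refine Summable.congr ((aux_hasSum_u.summable).mul_left (1/4)) (fun j => ?_)
  rw [aux_M_succ]

lemma aux_M_tsum : ∑' j, auxM j = 1/2 := by
  rw [Summable.tsum_eq_zero_add aux_M_summable]
  have h : ∑' (j : ℕ), auxM (j+1) = (1/4) * ∑' (j : ℕ), (((j:ℝ)+1) * ((j:ℝ)+2))⁻¹ := by
    rw [← tsum_mul_left]
    exact tsum_congr fun j => aux_M_succ j
  rw [h, aux_hasSum_u.tsum_eq]
  norm_num [auxM]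

lemma aux_primes_summable : Summable (fun p : Nat.Primes => ((p:ℝ)^2)⁻¹) :=
  (Real.summable_nat_pow_inv.mpr one_lt_two).comp_injective Nat.Primes.coe_nat_injective

lemma aux_primes_sum_le : ∑' p : Nat.Primes, ((p:ℝ)^2)⁻¹ ≤ 1/2 := by
  rw [← aux_M_tsum]
  have hM0 : ∀ j, 0 ≤ auxM j := by
    intro j
    unfold auxM
    split
    · norm_num
    · positivity
  refine Summable.tsum_le_tsum_of_inj (fun p : Nat.Primes => if p.1 = 2 then 0 else (p.1-1)/2)
    ?_ (fun c _ => hM0 c) ?_ aux_primes_summable aux_M_summable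
  · intro p q hpq
    simp only at hpq
    have hp2 := p.2.two_le
    have hq2 := q.2.two_le
    apply Nat.Primes.coe_nat_injective
    show p.1 = q.1
    by_cases hp : p.1 = 2 <;> by_cases hq : q.1 = 2 <;>
      rw [if_congr (Iff.rfl) rfl rfl] at hpq
    · omega
    · exfalso
      obtain ⟨a, ha⟩ := q.2.odd_of_ne_two hq
      rw [if_pos hp, if_neg hq] at hpq
      omega
    · exfalso
      obtain ⟨a, ha⟩ := p.2.odd_of_ne_two hp
      rw [if_neg hp, if_pos hq] at hpq
      omega
    · obtain ⟨a, ha⟩ := p.2.odd_of_ne_two hp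
      obtain ⟨b, hb⟩ := q.2.odd_of_ne_two hq
      rw [if_neg hp, if_neg hq] at hpq
      omega
  · intro p
    have hp2 := p.2.two_le
    show ((p.1 : ℝ)^2)⁻¹ ≤ auxM (if p.1 = 2 then 0 else (p.1-1)/2)
    by_cases hp : p.1 = 2
    · rw [if_pos hp, hp]
      norm_num [auxM]
    · obtain ⟨m, hm⟩ := p.2.odd_of_ne_two hp
      have hm1 : 1 ≤ m := by omega
      have hdiv : (p.1-1)/2 = m := by omega
      rw [if_neg hp, hdiv]
      rw [auxM, if_neg (by omega)]
      have hpr : ((p.1 : ℕ) : ℝ) = 2*(m:ℝ)+1 := by exact_mod_cast congrArg Nat.cast hm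
      rw [hpr]
      have hmr : (1:ℝ) ≤ (m:ℝ) := by exact_mod_cast hm1
      apply inv_anti₀
      · nlinarith
      · nlinarith
end auxfile

set_option maxHeartbeats 2000000 in
/-- The set `T = {n : φ(nk) > (2 c(k)/3) n k}` has at least `≫_k x` elements up to `x`. -/
theorem totient_large_set_density (k : ℕ) (hk : 2 ≤ k) :
    ∃ C : ℝ, 0 < C ∧ ∃ x₀ : ℝ, ∀ x : ℝ, x₀ ≤ x →
      C * x ≤ ((Finset.Icc 1 ⌊x⌋₊).filter (fun n : ℕ =>
        (2 * (∏' p : Nat.Primes, (1 - (Nat.gcd p k : ℝ) / (p : ℝ) ^ 2)) / 3) *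
          ((n * k : ℕ) : ℝ) < (Nat.totient (n * k) : ℝ))).card := by
  classical
  have hk0 : k ≠ 0 := by omega
  set f : Nat.Primes → ℝ := fun p => 1 - (Nat.gcd p k : ℝ) / (p : ℝ) ^ 2 with hf
  set c : ℝ := ∏' p : Nat.Primes, f p with hc
  set K : Finset ℕ := k.primeFactors with hK
  -- basic facts about f
  have hp2 : ∀ p : Nat.Primes, (2:ℝ) ≤ (p:ℕ) := fun p => by exact_mod_cast p.2.two_le
  have hppos : ∀ p : Nat.Primes, (0:ℝ) < (p:ℕ) := fun p => by linarith [hp2 p]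
  have hfdvd : ∀ p : Nat.Primes, (p:ℕ) ∣ k → f p = 1 - ((p:ℕ):ℝ)⁻¹ := by
    intro p hpk
    have : Nat.gcd (p:ℕ) k = (p:ℕ) := Nat.gcd_eq_left hpk
    simp only [hf, this]
    congr 1
    have := hppos p
    field_simp
  have hfndvd : ∀ p : Nat.Primes, ¬ (p:ℕ) ∣ k → f p = 1 - (((p:ℕ):ℝ)^2)⁻¹ := by
    intro p hpk
    have : Nat.gcd (p:ℕ) k = 1 := (Nat.Prime.coprime_iff_not_dvd p.2).2 hpk
    simp only [hf, this]
    norm_num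
  have hf0 : ∀ p, 0 ≤ f p := by
    intro p
    have hg : (Nat.gcd (p:ℕ) k : ℝ) ≤ ((p:ℕ):ℝ) := by
      exact_mod_cast Nat.le_of_dvd p.2.pos (Nat.gcd_dvd_left _ _)
    have h2 := hp2 p
    simp only [hf, sub_nonneg]
    rw [div_le_one (by positivity)]
    nlinarith
  have hf1 : ∀ p, f p ≤ 1 := by
    intro p
    simp only [hf]
    have : (0:ℝ) ≤ (Nat.gcd (p:ℕ) k : ℝ) / ((p:ℕ):ℝ)^2 := by positivity
    linarith
  have hmul : Multipliable f := aux_multipliable f hf0 hf1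
  -- the finite set of primes dividing k, inside Nat.Primes
  have hinj : Set.InjOn (fun p : Nat.Primes => (p:ℕ)) ((fun p : Nat.Primes => (p:ℕ)) ⁻¹' K) :=
    Nat.Primes.coe_nat_injective.injOn
  set s : Finset Nat.Primes := K.preimage (fun p : Nat.Primes => (p:ℕ)) hinj with hs
  have hmem_s : ∀ p : Nat.Primes, p ∈ s ↔ (p:ℕ) ∣ k := by
    intro p
    rw [hs, Finset.mem_preimage, hK, Nat.mem_primeFactors]
    exact ⟨fun h => h.2.1, fun h => ⟨p.2, h, hk0⟩⟩
  set D : ℝ := ∏' x : ↑(↑s : Set Nat.Primes)ᶜ, f ↑x with hD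
  set FK : ℝ := ∏ x ∈ s, f x with hFK
  have hmDc : Multipliable (fun x : ↑(↑s : Set Nat.Primes)ᶜ => f ↑x) :=
    aux_multipliable _ (fun x => hf0 _) (fun x => hf1 _)
  have hcFD : c = FK * D := ((s.hasProd f).mul_compl hmDc.hasProd).tprod_eq
  -- b on the complement
  set b : ↑(↑s : Set Nat.Primes)ᶜ → ℝ := fun x => (((x : Nat.Primes) : ℝ)^2)⁻¹ with hb
  have hxndvd : ∀ x : ↑(↑s : Set Nat.Primes)ᶜ, ¬ ((x : Nat.Primes) : ℕ) ∣ k := by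
    intro x
    have hx := x.2
    simp only [Set.mem_compl_iff, Finset.mem_coe] at hx
    rw [← hmem_s]
    exact hx
  have hDb : D = ∏' x : ↑(↑s : Set Nat.Primes)ᶜ, (1 - b x) :=
    tprod_congr fun x => hfndvd _ (hxndvd x)
  have hb0 : ∀ x, 0 ≤ b x := fun x => by positivity
  have hb1 : ∀ x, b x ≤ 1 := by
    intro x
    rw [hb]
    have := hp2 (x : Nat.Primes)
    rw [inv_le_one_iff₀]
    right
    nlinarith
  have hb_sum : Summable b := (aux_primes_summable).subtype _
  set u : ℝ := ∑' x, b x with hu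
  have hu0 : 0 ≤ u := tsum_nonneg hb0
  have hu2 : u ≤ 1/2 := by
    refine le_trans ?_ aux_primes_sum_le
    rw [hu]
    have := tsum_subtype (↑s : Set Nat.Primes)ᶜ (fun p : Nat.Primes => ((p:ℝ)^2)⁻¹)
    rw [this]
    refine Summable.tsum_le_tsum (fun p => Set.indicator_le_self' (fun p _ => by positivity) p)
      (aux_primes_summable.indicator _) aux_primes_summable
  have hu1 : u < 1 := lt_of_le_of_lt hu2 (by norm_num)
  -- D bounds
  have hmD : Multipliable (fun x => 1 - b x) :=
    aux_multipliable _ (fun x => by linarith [hb1 x]) (fun x => by linarith [hb0 x])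
  have hmE : Multipliable (fun x => 1 + b x) := aux_multipliable_one_add b hb0 hb_sum hu1
  set E : ℝ := ∏' x, (1 + b x) with hE
  have hDE : D * E ≤ 1 := by
    rw [hDb]
    have hpr : HasProd (fun x => (1 - b x) * (1 + b x))
        ((∏' x, (1 - b x)) * E) := hmD.hasProd.mul hmE.hasProd
    refine le_of_tendsto hpr (Eventually.of_forall fun sf => ?_)
    refine Finset.prod_le_one (fun x _ => by nlinarith [hb0 x, hb1 x])
      (fun x _ => by nlinarith [hb0 x, hb1 x])
  have hE_ge : 1 + u ≤ E := by
    have htend := hmE.hasProd.sub hb_sum.hasSum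
    have : ∀ sf, 1 ≤ (fun sf => (∏ x ∈ sf, (1 + b x)) - ∑ x ∈ sf, b x) sf := by
      intro sf
      have := aux_one_add_sum_le_prod sf b (fun x _ => hb0 x)
      simp only
      linarith
    have h1 : (1:ℝ) ≤ E - u := ge_of_tendsto htend (Eventually.of_forall this)
    linarith
  have hD0 : 0 ≤ D := by
    rw [hDb]
    exact ge_of_tendsto hmD.hasProd (Eventually.of_forall fun sf =>
      Finset.prod_nonneg fun x _ => by linarith [hb1 x])
  have hDu : D * (1 + u) ≤ 1 := by
    calc D * (1 + u) ≤ D * E := mul_le_mul_of_nonneg_left hE_ge hD0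
    _ ≤ 1 := hDE
  -- FK
  have hFK_eq : FK = ∏ q ∈ K, (1 - (q:ℝ)⁻¹) := by
    rw [hFK]
    rw [show (∏ x ∈ s, f x) = ∏ x ∈ s, (1 - (((x:Nat.Primes):ℕ):ℝ)⁻¹) from
      Finset.prod_congr rfl fun x hx => hfdvd x ((hmem_s x).1 hx)]
    exact Finset.prod_preimage (fun p : Nat.Primes => (p:ℕ)) K hinj
      (fun q => 1 - (q:ℝ)⁻¹)
      (fun q hq hnr => absurd ⟨⟨q, Nat.prime_of_mem_primeFactors hq⟩, rfl⟩ hnr)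
  have hFK_pos : 0 < FK := by
    rw [hFK_eq]
    refine Finset.prod_pos fun q hq => ?_
    have h2 : 2 ≤ q := (Nat.prime_of_mem_primeFactors hq).two_le
    have : (2:ℝ) ≤ (q:ℝ) := by exact_mod_cast h2
    have : (q:ℝ)⁻¹ ≤ 1/2 := by
      rw [inv_le_comm₀ (by linarith) (by norm_num)]
      linarith
    linarith
  -- threshold
  set t : ℝ := 1 - 2 / (3 * (1 + u)) with ht
  have h1u : (0:ℝ) < 1 + u := by linarith
  have ht13 : 1/3 ≤ t := by
    rw [ht]
    have : 2 / (3 * (1+u)) ≤ 2/3 := by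
      rw [div_le_div_iff₀ (by positivity) (by norm_num)]
      nlinarith
    linarith
  have ht1 : t ≤ 1 := by
    rw [ht]
    have : 0 ≤ 2 / (3 * (1+u)) := by positivity
    linarith
  have htgap : u + 1/18 ≤ t := by
    rw [ht]
    have : 2 / (3 * (1+u)) ≤ 1 - u - 1/18 := by
      rw [div_le_iff₀ (by positivity)]
      nlinarith
    linarith
  -- key pointwise lemma
  have hkey : ∀ n : ℕ, n ≠ 0 → (∑ p ∈ n.primeFactors \ K, ((p:ℝ))⁻¹) < t →
      (2 * c / 3) * ((n * k : ℕ) : ℝ) < (Nat.totient (n * k) : ℝ) := by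
    intro n hn hgn
    have hnk0 : n * k ≠ 0 := mul_ne_zero hn hk0
    have hnkpos : (0:ℝ) < ((n*k : ℕ):ℝ) := by
      have : 0 < n * k := Nat.pos_of_ne_zero hnk0
      exact_mod_cast this
    have htot : ((n*k).totient : ℝ) = ((n*k : ℕ):ℝ) * ∏ p ∈ (n*k).primeFactors, (1 - (p:ℝ)⁻¹) := by
      have hq := Nat.totient_eq_mul_prod_factors (n*k)
      have := congrArg (fun q : ℚ => (q:ℝ)) hq
      push_cast at this
      exact_mod_cast this
    have hpf : (n*k).primeFactors = K ∪ (n.primeFactors \ K) := by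
      ext q
      rw [Nat.primeFactors_mul hn hk0]
      simp only [Finset.mem_union, Finset.mem_sdiff]
      tauto
    have hprod_split : ∏ p ∈ (n*k).primeFactors, (1 - (p:ℝ)⁻¹)
        = (∏ q ∈ K, (1 - (q:ℝ)⁻¹)) * ∏ p ∈ n.primeFactors \ K, (1 - (p:ℝ)⁻¹) := by
      rw [hpf, Finset.prod_union Finset.disjoint_sdiff]
    have hNn : ∀ p ∈ n.primeFactors \ K, (2:ℝ) ≤ (p:ℝ) := by
      intro p hp
      have := (Nat.prime_of_mem_primeFactors (Finset.mem_sdiff.1 hp).1).two_le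
      exact_mod_cast this
    have hlow : 1 - (∑ p ∈ n.primeFactors \ K, ((p:ℝ))⁻¹)
        ≤ ∏ p ∈ n.primeFactors \ K, (1 - (p:ℝ)⁻¹) := by
      refine aux_one_sub_sum_le_prod _ _ (fun p hp => by positivity) (fun p hp => ?_)
      have := hNn p hp
      rw [inv_le_one_iff₀]
      right
      linarith
    have hmid : (2/3) * D < ∏ p ∈ n.primeFactors \ K, (1 - (p:ℝ)⁻¹) := by
      have h1 : (2/3) * D ≤ 2 / (3 * (1 + u)) := by
        rw [le_div_iff₀ (by positivity)]
        nlinarith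
      have h2 : (2:ℝ) / (3 * (1 + u)) = 1 - t := by rw [ht]; ring
      calc (2/3) * D ≤ 1 - t := by rw [← h2]; exact h1
      _ < 1 - (∑ p ∈ n.primeFactors \ K, ((p:ℝ))⁻¹) := by linarith
      _ ≤ _ := hlow
    have hmain : 2 * c / 3 < (∏ q ∈ K, (1 - (q:ℝ)⁻¹)) * ∏ p ∈ n.primeFactors \ K, (1 - (p:ℝ)⁻¹) := by
      rw [hcFD]
      calc 2 * (FK * D) / 3 = FK * ((2/3) * D) := by ring
      _ < FK * ∏ p ∈ n.primeFactors \ K, (1 - (p:ℝ)⁻¹) :=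
        mul_lt_mul_of_pos_left hmid hFK_pos
      _ = _ := by rw [hFK_eq]
    rw [htot, hprod_split]
    calc (2 * c / 3) * ((n*k : ℕ):ℝ)
        < ((∏ q ∈ K, (1 - (q:ℝ)⁻¹)) * ∏ p ∈ n.primeFactors \ K, (1 - (p:ℝ)⁻¹)) * ((n*k : ℕ):ℝ) :=
          mul_lt_mul_of_pos_right hmain hnkpos
      _ = ((n*k : ℕ):ℝ) * ((∏ q ∈ K, (1 - (q:ℝ)⁻¹)) * ∏ p ∈ n.primeFactors \ K, (1 - (p:ℝ)⁻¹)) := by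
          ring
  -- now the counting
  clear_value t
  clear_value u
  refine ⟨1/36, by norm_num, 2, fun x hx => ?_⟩
  set N : ℕ := ⌊x⌋₊ with hN
  have hN2 : 2 ≤ N := Nat.le_floor (by exact_mod_cast hx)
  have hN2R : (2:ℝ) ≤ (N:ℝ) := by exact_mod_cast hN2
  have hNx : (N:ℝ) ≤ x := Nat.floor_le (by linarith)
  have hxN : x < (N:ℝ) + 1 := Nat.lt_floor_add_one x
  set g : ℕ → ℝ := fun n => ∑ p ∈ n.primeFactors \ K, ((p:ℝ))⁻¹ with hg
  have hg0 : ∀ n, 0 ≤ g n := fun n => Finset.sum_nonneg fun p _ => by positivity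
  -- the average bound
  have hsum : ∑ n ∈ Finset.Icc 1 N, g n ≤ (N:ℝ) * u := by
    have hgrew : ∀ n ∈ Finset.Icc 1 N, g n
        = ∑ p ∈ Finset.Icc 2 N, (if p ∈ n.primeFactors \ K then (p:ℝ)⁻¹ else 0) := by
      intro n hn
      rw [Finset.sum_ite_mem, Finset.inter_eq_right.mpr, hg]
      intro p hp
      have hp' := Finset.mem_sdiff.1 hp
      have hprime := Nat.prime_of_mem_primeFactors hp'.1
      have hdvd := Nat.dvd_of_mem_primeFactors hp'.1
      have hn1 := (Finset.mem_Icc.1 hn).1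
      have hnN := (Finset.mem_Icc.1 hn).2
      have hple : p ≤ n := Nat.le_of_dvd (by omega) hdvd
      exact Finset.mem_Icc.2 ⟨hprime.two_le, le_trans hple hnN⟩
    rw [Finset.sum_congr rfl hgrew, Finset.sum_comm]
    have hinner : ∀ p ∈ Finset.Icc 2 N,
        (∑ n ∈ Finset.Icc 1 N, if p ∈ n.primeFactors \ K then (p:ℝ)⁻¹ else 0)
        ≤ (N:ℝ) * (if p.Prime ∧ p ∉ K then ((p:ℝ)^2)⁻¹ else 0) := by
      intro p hp
      by_cases hcond : p.Prime ∧ p ∉ K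
      · rw [if_pos hcond]
        have h2p : 2 ≤ p := hcond.1.two_le
        have hpR : (2:ℝ) ≤ (p:ℝ) := by exact_mod_cast h2p
        have hcard : ((Finset.Icc 1 N).filter (fun n => p ∣ n)).card = N / p := by
          rw [show Finset.Icc 1 N = Finset.Ioc 0 N from Finset.Icc_add_one_left_eq_Ioc 0 N]
          exact Nat.Ioc_filter_dvd_card_eq_div N p
        calc (∑ n ∈ Finset.Icc 1 N, if p ∈ n.primeFactors \ K then (p:ℝ)⁻¹ else 0)
            ≤ ∑ n ∈ Finset.Icc 1 N, (if p ∣ n then (p:ℝ)⁻¹ else 0) := by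
              refine Finset.sum_le_sum fun n hn => ?_
              by_cases hmem : p ∈ n.primeFactors \ K
              · rw [if_pos hmem,
                  if_pos (Nat.dvd_of_mem_primeFactors (Finset.mem_sdiff.1 hmem).1)]
              · rw [if_neg hmem]
                split <;> positivity
          _ = (((Finset.Icc 1 N).filter (fun n => p ∣ n)).card : ℝ) * (p:ℝ)⁻¹ := by
              rw [← Finset.sum_filter, Finset.sum_const, nsmul_eq_mul]
          _ ≤ ((N:ℝ)/(p:ℝ)) * (p:ℝ)⁻¹ := by
              refine mul_le_mul_of_nonneg_right ?_ (by positivity)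
              rw [hcard]
              exact Nat.cast_div_le
          _ = (N:ℝ) * ((p:ℝ)^2)⁻¹ := by
              rw [pow_two, mul_inv, div_eq_mul_inv]
              ring
      · rw [if_neg hcond, mul_zero]
        refine le_of_eq (Finset.sum_eq_zero fun n hn => ?_)
        rw [if_neg]
        intro hmem
        have hp' := Finset.mem_sdiff.1 hmem
        exact hcond ⟨Nat.prime_of_mem_primeFactors hp'.1, hp'.2⟩
    refine le_trans (Finset.sum_le_sum hinner) ?_
    rw [← Finset.mul_sum]
    refine mul_le_mul_of_nonneg_left ?_ (Nat.cast_nonneg N)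
    rw [← Finset.sum_filter]
    set V : Finset ℕ := (Finset.Icc 2 N).filter (fun p => p.Prime ∧ p ∉ K) with hV
    have hinjV : Set.InjOn (fun q : Nat.Primes => (q:ℕ))
        ((fun q : Nat.Primes => (q:ℕ)) ⁻¹' V) := Nat.Primes.coe_nat_injective.injOn
    have hpre := Finset.sum_preimage (fun q : Nat.Primes => (q:ℕ)) V hinjV
      (fun m => (((m:ℕ):ℝ)^2)⁻¹)
      (fun p hp hnr => absurd ⟨⟨p, ((Finset.mem_filter.1 hp).2).1⟩, rfl⟩ hnr)
    rw [← hpre]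
    have hindu : u = ∑' p : Nat.Primes,
        Set.indicator (↑(↑s : Set Nat.Primes)ᶜ : Set Nat.Primes)
          (fun q : Nat.Primes => (((q:ℕ):ℝ)^2)⁻¹) p := by
      rw [hu]
      exact _root_.tsum_subtype ((↑s : Set Nat.Primes)ᶜ) (fun q : Nat.Primes => (((q:ℕ):ℝ)^2)⁻¹)
    rw [hindu]
    have hmemT : ∀ q : Nat.Primes, (q:ℕ) ∈ V →
        q ∈ ((↑s : Set Nat.Primes)ᶜ : Set Nat.Primes) := by
      intro q hq
      have hnK : (q:ℕ) ∉ K := ((Finset.mem_filter.1 hq).2).2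
      simp only [Set.mem_compl_iff, Finset.mem_coe]
      rw [hmem_s]
      intro hdvd
      exact hnK (Nat.mem_primeFactors.2 ⟨q.2, hdvd, hk0⟩)
    have hcongr : ∀ q ∈ V.preimage (fun q : Nat.Primes => (q:ℕ)) hinjV,
        (((q:ℕ):ℝ)^2)⁻¹ = Set.indicator (↑(↑s : Set Nat.Primes)ᶜ : Set Nat.Primes)
          (fun q : Nat.Primes => (((q:ℕ):ℝ)^2)⁻¹) q := by
      intro q hq
      rw [Set.indicator_of_mem (hmemT q (Finset.mem_preimage.1 hq))]
    rw [Finset.sum_congr rfl hcongr]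
    refine Summable.sum_le_tsum _ (fun q _ => Set.indicator_nonneg (fun q _ => by positivity) q)
      (aux_primes_summable.indicator _)
  set Bad : Finset ℕ := (Finset.Icc 1 N).filter (fun n => t ≤ g n) with hBad
  have hBadcard : (Bad.card : ℝ) * t ≤ (N:ℝ) * u := by
    calc (Bad.card : ℝ) * t = ∑ _n ∈ Bad, t := by rw [Finset.sum_const, nsmul_eq_mul]
    _ ≤ ∑ n ∈ Bad, g n := Finset.sum_le_sum fun n hn => (Finset.mem_filter.1 hn).2
    _ ≤ ∑ n ∈ Finset.Icc 1 N, g n :=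
        Finset.sum_le_sum_of_subset_of_nonneg (Finset.filter_subset _ _) (fun n _ _ => hg0 n)
    _ ≤ (N:ℝ) * u := hsum
  set Good : Finset ℕ := (Finset.Icc 1 N).filter (fun n : ℕ =>
    (2 * c / 3) * ((n * k : ℕ) : ℝ) < (Nat.totient (n * k) : ℝ)) with hGood
  have hsub : Finset.Icc 1 N ⊆ Good ∪ Bad := by
    intro n hn
    have hn1 : 1 ≤ n := (Finset.mem_Icc.1 hn).1
    by_cases hgt : t ≤ g n
    · exact Finset.mem_union_right _ (Finset.mem_filter.2 ⟨hn, hgt⟩)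
    · exact Finset.mem_union_left _ (Finset.mem_filter.2 ⟨hn,
        hkey n (by omega) (by rw [hg] at hgt; push_neg at hgt; exact hgt)⟩)
  have hcards : (N:ℝ) ≤ (Good.card : ℝ) + (Bad.card : ℝ) := by
    have h1 : N = (Finset.Icc 1 N).card := by rw [Nat.card_Icc]; omega
    have h2 : (Finset.Icc 1 N).card ≤ (Good ∪ Bad).card := Finset.card_le_card hsub
    have h3 : (Good ∪ Bad).card ≤ Good.card + Bad.card := Finset.card_union_le _ _
    have : N ≤ Good.card + Bad.card := by omega
    exact_mod_cast this
  -- final numeric computation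
  have s1 : (N:ℝ) * u ≤ (N:ℝ)*t - (N:ℝ)/18 := by nlinarith [htgap, hN2R]
  have s2 : (N:ℝ)/18 ≤ ((N:ℝ) - Bad.card) * t := by
    have expand : ((N:ℝ) - Bad.card) * t = (N:ℝ)*t - (Bad.card:ℝ)*t := by ring
    linarith
  have s3 : (0:ℝ) ≤ (N:ℝ) - Bad.card := by nlinarith [s2, ht13, hN2R]
  have s4 : (N:ℝ)/18 ≤ (N:ℝ) - Bad.card := by
    have := mul_le_of_le_one_right s3 ht1
    linarith
  show (1/36) * x ≤ (Good.card : ℝ)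
  nlinarith [hcards, s4, hN2R, hxN]
end

section
/- Let α/β be an algebraic number that is not a root of unity, with (α+β)² and αβ coprime nonzero integers. For m < n, if a prime element γ of ℚ(√Δ), with γ not an associate of √Δ, divides both Φ_m(α/β) and Φ_n(α/β), then γ² divides (α/β)ⁿ − 1, in the sense of γ-adic valuations. -/
/-- The homogenized cyclotomic polynomial `Φ_m(a, b) = b ^ φ(m) · Φ_m(a / b)`,
written as `∑ i, c_i a ^ i b ^ (φ(m) - i)` where `c_i` are the coefficients of `Φ_m`. -/
noncomputable def homCyclotomicEval (R : Type*) [CommRing R] (m : ℕ) (a b : R) : R :=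
  ∑ i ∈ Finset.range (Nat.totient m + 1),
    (Polynomial.cyclotomic m R).coeff i * a ^ i * b ^ (Nat.totient m - i)

open Polynomial Finset in
lemma hce_field {K : Type*} [Field K] (m : ℕ) (a b : K) (hb : b ≠ 0) :
    homCyclotomicEval K m a b = b ^ m.totient * (cyclotomic m K).eval (a / b) := by
  rw [eval_eq_sum_range, natDegree_cyclotomic, Finset.mul_sum]
  unfold homCyclotomicEval
  refine Finset.sum_congr rfl fun i hi => ?_
  rw [Finset.mem_range, Nat.lt_succ_iff] at hi
  rw [div_pow, ← pow_sub_mul_pow b hi]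
  field_simp

lemma hce_map {R S : Type*} [CommRing R] [CommRing S] (f : R →+* S) (m : ℕ) (a b : R) :
    f (homCyclotomicEval R m a b) = homCyclotomicEval S m (f a) (f b) := by
  unfold homCyclotomicEval
  rw [map_sum]
  refine Finset.sum_congr rfl fun i _ => ?_
  rw [map_mul, map_mul, map_pow, map_pow, ← Polynomial.coeff_map, Polynomial.map_cyclotomic]

open Polynomial Finset in
lemma prod_hce_field {K : Type*} [Field K] (n : ℕ) (hn : 0 < n) (a b : K) (hb : b ≠ 0) :
    ∏ d ∈ n.divisors, homCyclotomicEval K d a b = a ^ n - b ^ n := by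
  have : ∀ d ∈ n.divisors, homCyclotomicEval K d a b
      = b ^ d.totient * (cyclotomic d K).eval (a / b) := fun d _ => hce_field d a b hb
  rw [Finset.prod_congr rfl this, Finset.prod_mul_distrib, Finset.prod_pow_eq_pow_sum,
    Nat.sum_totient, ← Polynomial.eval_prod, Polynomial.prod_cyclotomic_eq_X_pow_sub_one hn,
    Polynomial.eval_sub, Polynomial.eval_pow, Polynomial.eval_X, Polynomial.eval_one, div_pow]
  field_simp

open Polynomial Finset in
lemma prod_hce {R : Type*} [CommRing R] [IsDomain R] (n : ℕ) (hn : 0 < n) (a b : R)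
    (hb : b ≠ 0) :
    ∏ d ∈ n.divisors, homCyclotomicEval R d a b = a ^ n - b ^ n := by
  have hinj := IsFractionRing.injective R (FractionRing R)
  apply hinj
  rw [map_prod, map_sub, map_pow, map_pow]
  rw [Finset.prod_congr rfl fun d _ => hce_map (algebraMap R (FractionRing R)) d a b]
  exact prod_hce_field n hn _ _ (fun h => hb (hinj (by rw [h, map_zero])))

lemma hce_dvd {R : Type*} [CommRing R] [IsDomain R] {n : ℕ} (hn : 0 < n) {d : ℕ}
    (hd : d ∈ n.divisors) (a b : R) (hb : b ≠ 0) :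
    homCyclotomicEval R d a b ∣ a ^ n - b ^ n := by
  rw [← prod_hce n hn a b hb]
  exact Finset.dvd_prod_of_mem _ hd

lemma euclid_descent {R : Type*} [CommRing R] {γ a b : R} (hγ : Prime γ) (hb : ¬ γ ∣ b) :
    ∀ N m n : ℕ, m + n ≤ N → 0 < m → 0 < n → γ ∣ a ^ m - b ^ m → γ ∣ a ^ n - b ^ n →
      γ ∣ a ^ Nat.gcd m n - b ^ Nat.gcd m n := by
  intro N
  induction N with
  | zero => intro m n h hm hn _ _; omega
  | succ N ih =>
    intro m n hN hm hn h1 h2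
    rcases lt_trichotomy m n with h | h | h
    · obtain ⟨k, rfl⟩ : ∃ k, n = m + k := ⟨n - m, by omega⟩
      have hk : 0 < k := by omega
      have key : b ^ m * (a ^ k - b ^ k)
          = (a ^ (m + k) - b ^ (m + k)) - a ^ k * (a ^ m - b ^ m) := by
        rw [pow_add, pow_add]; ring
      have h3 : γ ∣ b ^ m * (a ^ k - b ^ k) := by
        rw [key]; exact dvd_sub h2 (Dvd.dvd.mul_left h1 _)
      have h4 : γ ∣ a ^ k - b ^ k := by
        rcases hγ.dvd_or_dvd h3 with h | h
        · exact absurd (hγ.dvd_of_dvd_pow h) hb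
        · exact h
      have hg : Nat.gcd m (m + k) = Nat.gcd m k := by
        rw [Nat.add_comm, Nat.gcd_add_self_right]
      rw [hg]
      exact ih m k (by omega) hm hk h1 h4
    · subst h; rwa [Nat.gcd_self]
    · obtain ⟨k, rfl⟩ : ∃ k, m = n + k := ⟨m - n, by omega⟩
      have hk : 0 < k := by omega
      have key : b ^ n * (a ^ k - b ^ k)
          = (a ^ (n + k) - b ^ (n + k)) - a ^ k * (a ^ n - b ^ n) := by
        rw [pow_add, pow_add]; ring
      have h3 : γ ∣ b ^ n * (a ^ k - b ^ k) := by
        rw [key]; exact dvd_sub h1 (Dvd.dvd.mul_left h2 _)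
      have h4 : γ ∣ a ^ k - b ^ k := by
        rcases hγ.dvd_or_dvd h3 with h | h
        · exact absurd (hγ.dvd_of_dvd_pow h) hb
        · exact h
      have hg : Nat.gcd (n + k) n = Nat.gcd k n := by
        rw [Nat.add_comm, Nat.gcd_add_self_left]
      rw [hg, Nat.gcd_comm]
      exact ih n k (by omega) hn hk h2 h4

/-- If a prime element `γ` of (the ring of integers of) `ℚ(√Δ)`, not an associate of
`√Δ`, divides both `Φ_m(α/β)` and `Φ_n(α/β)` (interpreted homogeneously) with `m < n`,
where `α/β` is not a root of unity and `(α+β)²`, `αβ` are coprime and nonzero,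
then `γ²` divides `(α/β)ⁿ − 1`, i.e. `γ² ∣ αⁿ − βⁿ`. -/
theorem gamma_sq_dvd (R : Type*) [CommRing R] [IsDomain R] (α β γ sδ : R)
    (hcop : IsCoprime ((α + β) ^ 2) (α * β))
    (hPne : (α + β) ^ 2 ≠ 0) (hQne : α * β ≠ 0)
    (hru : ∀ j : ℕ, 0 < j → α ^ j ≠ β ^ j)
    (hγ : Prime γ) (hsδ : sδ ^ 2 = (α + β) ^ 2 - 4 * (α * β))
    (hass : ¬ Associated γ sδ) (hγαβ : ¬ γ ∣ α * β)
    (m n : ℕ) (hm : 0 < m) (hmn : m < n)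
    (h1 : γ ∣ homCyclotomicEval R m α β) (h2 : γ ∣ homCyclotomicEval R n α β) :
    γ ^ 2 ∣ α ^ n - β ^ n := by
  have hn : 0 < n := hm.trans hmn
  have hβ : β ≠ 0 := fun h => hQne (by rw [h, mul_zero])
  have hγβ : ¬ γ ∣ β := fun h => hγαβ (h.mul_left α)
  -- γ divides α^m - β^m and α^n - β^n
  have hdm : γ ∣ α ^ m - β ^ m :=
    h1.trans (hce_dvd hm (Nat.mem_divisors_self m hm.ne') α β hβ)
  have hdn : γ ∣ α ^ n - β ^ n :=
    h2.trans (hce_dvd hn (Nat.mem_divisors_self n hn.ne') α β hβ)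
  -- descend to g = gcd m n
  set g := Nat.gcd m n with hgdef
  have hg0 : 0 < g := Nat.gcd_pos_of_pos_left n hm
  have hgn : g ∣ n := Nat.gcd_dvd_right m n
  have hglt : g < n := lt_of_le_of_lt (Nat.le_of_dvd hm (Nat.gcd_dvd_left m n)) hmn
  have hdg : γ ∣ α ^ g - β ^ g := euclid_descent hγ hγβ (m + n) m n le_rfl hm hn hdm hdn
  -- factorization: (α^g - β^g) * Φ̂_n ∣ α^n - β^n
  have hsub : insert n g.divisors ⊆ n.divisors := by
    intro d hd
    rcases Finset.mem_insert.mp hd with rfl | hd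
    · exact Nat.mem_divisors_self d hn.ne'
    · exact Nat.divisors_subset_of_dvd hn.ne' hgn hd
  have hnnot : n ∉ g.divisors := fun h =>
    absurd (Nat.le_of_dvd hg0 (Nat.dvd_of_mem_divisors h)) (not_le.mpr hglt)
  have hfac : (α ^ g - β ^ g) * homCyclotomicEval R n α β ∣ α ^ n - β ^ n := by
    rw [← prod_hce n hn α β hβ, ← prod_hce g hg0 α β hβ]
    have := Finset.prod_dvd_prod_of_subset (insert n g.divisors) n.divisors
      (fun d => homCyclotomicEval R d α β) hsub
    rwa [Finset.prod_insert hnnot, mul_comm] at this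
  calc γ ^ 2 = γ * γ := sq γ
    _ ∣ (α ^ g - β ^ g) * homCyclotomicEval R n α β := mul_dvd_mul hdg h2
    _ ∣ α ^ n - β ^ n := hfac
end
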